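/- arXiv:2106.06827 — 6 statements merged into one kernel-verified Lean document; each statement's English description precedes it below -/
import Mathlib

section
/- For any tree T with at least two vertices, the monophonic position number of T equals the number of leaves of T. -/
open SimpleGraph

/-- A walk is an *induced (monophonic) path* if it is a path and vertices on the
walk are adjacent in `G` exactly when they are consecutive on the walk. -/
def IsInducedPathW {V : Type*} (G : SimpleGraph V) {u v : V} (p : G.Walk u v) : Prop :=
  p.IsPath ∧ ∀ a b : V, a ∈ p.support → b ∈ p.support → (G.Adj a b ↔ p.toSubgraph.Adj a b)

/-- A walk is a *geodesic* if it is a shortest path between its endpoints. -/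
def IsGeodesicW {V : Type*} (G : SimpleGraph V) {u v : V} (p : G.Walk u v) : Prop :=
  p.IsPath ∧ p.length = G.dist u v

/-- A set of vertices is in *monophonic position* if no induced path of `G`
contains more than two of its vertices. -/
def IsMpSet {V : Type*} (G : SimpleGraph V) (S : Set V) : Prop :=
  ∀ ⦃u v : V⦄ (p : G.Walk u v), IsInducedPathW G p → (S ∩ {x | x ∈ p.support}).ncard ≤ 2

/-- A set of vertices is in *general position* if no geodesic of `G` contains
more than two of its vertices. -/
def IsGpSet {V : Type*} (G : SimpleGraph V) (S : Set V) : Prop :=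
  ∀ ⦃u v : V⦄ (p : G.Walk u v), IsGeodesicW G p → (S ∩ {x | x ∈ p.support}).ncard ≤ 2

/-- The monophonic position number `mp(G)`. -/
noncomputable def mpNum {V : Type*} (G : SimpleGraph V) : ℕ :=
  sSup {n | ∃ S : Set V, IsMpSet G S ∧ S.ncard = n}

/-- The general position number `gp(G)`. -/
noncomputable def gpNum {V : Type*} (G : SimpleGraph V) : ℕ :=
  sSup {n | ∃ S : Set V, IsGpSet G S ∧ S.ncard = n}

/-!
An internal vertex of a path has degree at least two, so the leaves are in monophonic position.
Conversely, every path of a tree is induced, so no vertex of an mp set `S` lies between two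
others. Hence each non-leaf `s ∈ S` has a neighbour `a` whose branch (the vertices whose path
from `s` has second vertex `a`) avoids `S \ {s}`, and the end `x` of a longest path leaving `s`
through `a` is a leaf separated from `S \ {s}` by `s` (a leaf `s ∈ S` takes `x = s`). The map
`s ↦ x` is injective: two distinct vertices cannot each separate the other from the same leaf.
-/

namespace SimpleGraph

open Walk

variable {V : Type*} {G : SimpleGraph V}

lemma Walk.snd_concat {u v w : V} {p : G.Walk u v} (hp : ¬p.Nil) (h : G.Adj v w) :
    (p.concat h).snd = p.snd := by
  have := p.not_nil_iff_lt_length.mp hp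
  rw [concat_eq_append, snd, snd, getVert_append]
  split_ifs with h1
  · rfl
  · have : p.length = 1 := by omega
    simp [← this, getVert_length]

lemma Walk.not_nil_of_mem_support_of_ne {u v w : V} {p : G.Walk u v} (hw : w ∈ p.support)
    (hwu : w ≠ u) : ¬p.Nil :=
  fun h => hwu (by simpa [nil_iff_support_eq.mp h] using hw)

lemma Walk.IsPath.two_le_degree {u w v : V} [Fintype (G.neighborSet v)] {p : G.Walk u w}
    (hp : p.IsPath) (hv : v ∈ p.support) (hvu : v ≠ u) (hvw : v ≠ w) : 2 ≤ G.degree v := by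
  obtain ⟨i, rfl, hi⟩ := mem_support_iff_exists_getVert.mp hv
  have hi0 : i ≠ 0 := by rintro rfl; exact hvu p.getVert_zero
  have hil : i < p.length := lt_of_le_of_ne hi (by rintro rfl; exact hvw p.getVert_length)
  rw [← hp.ncard_neighborSet_toSubgraph_internal_eq_two hi0 hil, ← card_neighborSet_eq_degree,
    ← Nat.card_eq_fintype_card, Nat.card_coe_set_eq]
  exact Set.ncard_le_ncard (p.toSubgraph.neighborSet_subset _) (Set.toFinite _)

lemma isMpSet_setOf_degree_eq_one [G.LocallyFinite] : IsMpSet G {v | G.degree v = 1} := by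
  intro u w p hp
  have hsub : {v | G.degree v = 1} ∩ {x | x ∈ p.support} ⊆ {u, w} := by
    rintro v ⟨hv1, hv⟩
    by_contra hne
    simp only [Set.mem_insert_iff, Set.mem_singleton_iff, not_or] at hne
    have := hp.1.two_le_degree hv hne.1 hne.2
    simp_all
  exact (Set.ncard_le_ncard hsub (Set.toFinite _)).trans
    ((Set.ncard_insert_le u {w}).trans (by simp))

lemma IsAcyclic.isInducedPathW (hG : G.IsAcyclic) {u v : V} {p : G.Walk u v} (hp : p.IsPath) :
    IsInducedPathW G p := by
  classical
  refine ⟨hp, fun a b ha hb => ⟨fun hab => ?_, fun h => h.adj_sub⟩⟩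
  rw [adj_toSubgraph_iff_mem_edges]
  obtain ⟨q, r, hq, hr, rfl⟩ := hp.mem_support_iff_exists_append.mp ha
  rw [edges_append, List.mem_append]
  rcases (mem_support_append_iff q r).mp hb with hbq | hbr
  · left
    rw [hG.eq_penultimate_of_adj_end hq hab hbq, Sym2.eq_swap]
    exact q.mk_penultimate_end_mem_edges
      (nil_reverse.not.mp (not_nil_of_mem_support_of_ne (by simpa using hbq) hab.ne'))
  · right
    rw [hG.eq_snd_of_adj_start hr hab hbr]
    exact r.mk_start_snd_mem_edges (not_nil_of_mem_support_of_ne hbr hab.ne')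

lemma IsAcyclic.snd_eq_snd_of_adj (hG : G.IsAcyclic) {s u v : V} {p : G.Walk s u}
    {q : G.Walk s v} (hp : p.IsPath) (hq : q.IsPath) (hu : u ≠ s) (hv : v ≠ s)
    (huv : G.Adj u v) : p.snd = q.snd := by
  by_cases hvp : v ∈ p.support
  · rw [hG.path_concat hq hp huv.symm hvp, snd_concat (not_nil_of_ne hv.symm)]
  · have huq := hG.mem_support_of_ne_mem_support_of_adj_of_isPath hq hp huv.symm hvp
    rw [hG.path_concat hp hq huv huq, snd_concat (not_nil_of_ne hu.symm)]

lemma IsAcyclic.exists_isPath_snd_eq_degree_eq_one [Fintype V] [DecidableRel G.Adj]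
    (hG : G.IsAcyclic) {s a : V} (hsa : G.Adj s a) :
    ∃ (x : V) (p : G.Walk s x), p.IsPath ∧ p.snd = a ∧ G.degree x = 1 := by
  classical
  let L := {n | ∃ (x : V) (p : G.Walk s x), p.IsPath ∧ p.snd = a ∧ p.length = n}
  have hL : L.Finite := (Set.finite_lt_nat (Fintype.card V)).subset
    fun n ⟨_, p, hp, _, hn⟩ => hn ▸ hp.length_lt
  obtain ⟨_, ⟨x, p, hp, hpa, rfl⟩, hmax⟩ :=
    hL.exists_maximal ⟨1, a, hsa.toWalk, by simp [hsa.ne]⟩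
  have hnil : ¬p.Nil := not_nil_of_mem_support_of_ne (hpa ▸ p.getVert_mem_support 1) hsa.ne'
  -- a longest such path cannot be extended, so every neighbour of `x` already lies on it
  have hnbr : ∀ y, G.Adj x y → y ∈ p.support := by
    intro y hxy
    by_contra hy
    have := hmax ⟨y, p.concat hxy, hp.concat hy hxy, (snd_concat hnil hxy).trans hpa, rfl⟩
    simp at this
  refine ⟨x, p, hp, hpa, degree_eq_one_iff_existsUnique_adj.mpr
    ⟨p.penultimate, (p.adj_penultimate hnil).symm, fun y hxy => ?_⟩⟩
  exact hG.eq_penultimate_of_adj_end hp hxy (hnbr y hxy)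

lemma IsTree.snd_eq_snd_of_notMem_support (hT : G.IsTree) {s u v : V} {p : G.Walk s u}
    {q : G.Walk s v} (hp : p.IsPath) (hq : q.IsPath) (r : G.Walk u v) (hr : s ∉ r.support) :
    p.snd = q.snd := by
  induction r with
  | nil =>
    exact congrArg (fun p : G.Path s _ => p.1.snd)
      ((hT.isAcyclic.subsingleton_path _ _).elim ⟨p, hp⟩ ⟨q, hq⟩)
  | @cons u w v huw r ih =>
    rw [support_cons, List.mem_cons, not_or] at hr
    obtain ⟨p', hp'⟩ := hT.connected.exists_isPath s w
    have hw : w ≠ s := fun h => hr.2 (h ▸ r.start_mem_support)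
    exact (hT.isAcyclic.snd_eq_snd_of_adj hp hp' (Ne.symm hr.1) hw huw).trans (ih hp' hq hr.2)

lemma Reachable.eq_of_forall_mem_support {s t x : V} (htx : G.Reachable t x)
    (hs : ∀ p : G.Walk t x, s ∈ p.support) (ht : ∀ p : G.Walk s x, t ∈ p.support) :
    s = t := by
  classical
  obtain ⟨p, hp⟩ := htx.exists_isPath
  obtain ⟨q, r, -, -, rfl⟩ := hp.mem_support_iff_exists_append.mp (hs p)
  by_contra hst
  exact hp.ne_of_mem_support_of_append (Ne.symm hst) q.start_mem_support (ht r) rfl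

namespace IsMpSet

variable {S : Set V}

lemma eq_or_eq_of_forall_mem_support (hT : G.IsTree) (hS : IsMpSet G S) {s t₁ t₂ : V}
    (hs : s ∈ S) (ht₁ : t₁ ∈ S) (ht₂ : t₂ ∈ S)
    (hsep : ∀ r : G.Walk t₁ t₂, s ∈ r.support) : s = t₁ ∨ s = t₂ := by
  obtain ⟨r, hr⟩ := hT.connected.exists_isPath t₁ t₂
  by_contra! hne
  have ht : t₁ ≠ t₂ := by
    rintro rfl
    exact hne.1 (by simpa using hsep nil)
  have h3 : ({t₁, s, t₂} : Set V) ⊆ S ∩ {x | x ∈ r.support} := by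
    rintro y (rfl | rfl | rfl)
    exacts [⟨ht₁, r.start_mem_support⟩, ⟨hs, hsep r⟩, ⟨ht₂, r.end_mem_support⟩]
  have h3le := Set.ncard_le_ncard h3 (r.support.finite_toSet.inter_of_right S)
  rw [Set.ncard_eq_three.mpr ⟨t₁, s, t₂, hne.1.symm, ht, hne.2, rfl⟩] at h3le
  have := hS r (hT.isAcyclic.isInducedPathW hr)
  omega

lemma exists_adj_forall_snd_ne (hT : G.IsTree) (hS : IsMpSet G S) {s : V}
    [Fintype (G.neighborSet s)] (hs : s ∈ S) (hdeg : 2 ≤ G.degree s) :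
    ∃ a, G.Adj s a ∧ ∀ t ∈ S, t ≠ s → ∀ p : G.Walk s t, p.IsPath → p.snd ≠ a := by
  obtain ⟨a, ha, b, hb, hab⟩ :=
    Finset.one_lt_card.mp (card_neighborFinset_eq_degree G s ▸ hdeg)
  rw [mem_neighborFinset] at ha hb
  by_contra! hocc
  obtain ⟨ta, hta, htas, pa, hpa, rfl⟩ := hocc _ ha
  obtain ⟨tb, htb, htbs, pb, hpb, rfl⟩ := hocc _ hb
  -- `ta` and `tb` hang off different neighbours of `s`, so `s` lies between them
  have hsep : ∀ r : G.Walk ta tb, s ∈ r.support := fun r =>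
    not_not.mp fun hr => hab (hT.snd_eq_snd_of_notMem_support hpa hpb r hr)
  rcases hS.eq_or_eq_of_forall_mem_support hT hs hta htb hsep with h | h
  exacts [htas h.symm, htbs h.symm]

lemma exists_degree_eq_one_forall_mem_support [Fintype V] [Nontrivial V] [DecidableRel G.Adj]
    (hT : G.IsTree) (hS : IsMpSet G S) {s : V} (hs : s ∈ S) :
    ∃ x, G.degree x = 1 ∧ ∀ t ∈ S, t ≠ s → ∀ r : G.Walk t x, s ∈ r.support := by
  by_cases hleaf : G.degree s = 1
  · exact ⟨s, hleaf, fun t _ _ r => r.end_mem_support⟩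
  have hdeg : 2 ≤ G.degree s := by
    have := hT.connected.preconnected.degree_pos_of_nontrivial s
    omega
  obtain ⟨a, hsa, hfree⟩ := hS.exists_adj_forall_snd_ne hT hs hdeg
  obtain ⟨x, q, hq, hqa, hx⟩ := hT.isAcyclic.exists_isPath_snd_eq_degree_eq_one hsa
  refine ⟨x, hx, fun t ht hts r => ?_⟩
  by_contra hr
  obtain ⟨p, hp⟩ := hT.connected.exists_isPath s t
  exact hfree t ht hts p hp ((hT.snd_eq_snd_of_notMem_support hp hq r hr).trans hqa)

lemma ncard_le_ncard_setOf_degree_eq_one [Fintype V] [Nontrivial V] [DecidableRel G.Adj]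
    (hT : G.IsTree) (hS : IsMpSet G S) : S.ncard ≤ {v | G.degree v = 1}.ncard := by
  have hleaf (s : V) : ∃ x, s ∈ S →
      G.degree x = 1 ∧ ∀ t ∈ S, t ≠ s → ∀ r : G.Walk t x, s ∈ r.support := by
    by_cases hs : s ∈ S
    · obtain ⟨x, hx⟩ := hS.exists_degree_eq_one_forall_mem_support hT hs
      exact ⟨x, fun _ => hx⟩
    · exact ⟨s, fun h => absurd h hs⟩
  choose f hf using hleaf
  refine Set.ncard_le_ncard_of_injOn f (fun s hs => (hf s hs).1) ?_ (Set.toFinite _)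
  intro s hs t ht hst
  by_contra hne
  exact hne (Reachable.eq_of_forall_mem_support (hT.connected t (f s))
    ((hf s hs).2 t ht (Ne.symm hne)) (hst ▸ (hf t ht).2 s hs hne))

end IsMpSet

end SimpleGraph

theorem tree_mp_eq_leaves_general {V : Type*} [Fintype V]
    (G : SimpleGraph V) [DecidableRel G.Adj] (hT : G.IsTree) (h2 : 2 ≤ Fintype.card V) :
    mpNum G = (Finset.univ.filter fun v => G.degree v = 1).card := by
  have : Nontrivial V := Fintype.one_lt_card_iff_nontrivial.mp h2
  have hleaves :
      ((Finset.univ.filter fun v => G.degree v = 1) : Set V) = {v | G.degree v = 1} := by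
    simp
  refine IsGreatest.csSup_eq ⟨⟨_, isMpSet_setOf_degree_eq_one, ?_⟩, ?_⟩
  · rw [← hleaves, Set.ncard_coe_finset]
  · rintro n ⟨S, hS, rfl⟩
    rw [← Set.ncard_coe_finset, hleaves]
    exact hS.ncard_le_ncard_setOf_degree_eq_one hT

theorem tree_mp_eq_leaves {V : Type*} [Fintype V] [DecidableEq V]
    (G : SimpleGraph V) [DecidableRel G.Adj] (hT : G.IsTree) (h2 : 2 ≤ Fintype.card V) :
    mpNum G = (Finset.univ.filter fun v => G.degree v = 1).card :=
  tree_mp_eq_leaves_general G hT h2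
end

section
/- For integers r_1 ≥ r_2 ≥ ... ≥ r_t ≥ 1, the monophonic position number of the complete multipartite graph K_{r_1,...,r_t} equals max{r_1, t}. -/
open SimpleGraph

open SimpleGraph Set

variable {t : ℕ} {r : Fin t → ℕ}

local notation "G" => completeMultipartiteGraph fun i : Fin t => Fin (r i)

lemma adj_iff (x y : Σ i : Fin t, Fin (r i)) : (G).Adj x y ↔ x.1 ≠ y.1 := by
  simp [completeMultipartiteGraph]

-- no induced path has length ≥ 3
lemma no_long {a b c d e : Σ i : Fin t, Fin (r i)} (h1 : (G).Adj a b) (h2 : (G).Adj b c)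
    (h3 : (G).Adj c d) (q : (G).Walk d e) :
    ¬ IsInducedPathW G (Walk.cons h1 (Walk.cons h2 (Walk.cons h3 q))) := by
  rintro ⟨hpath, hind⟩
  set t2 : (G).Walk c e := Walk.cons h3 q with ht2
  set t1 : (G).Walk b e := Walk.cons h2 t2 with ht1
  set p : (G).Walk a e := Walk.cons h1 t1 with hp
  have hpath1 : t1.IsPath := ((Walk.cons_isPath_iff _ _).mp hpath).1
  have hpath2 : t2.IsPath := ((Walk.cons_isPath_iff _ _).mp hpath1).1
  have hat1 : a ∉ t1.support := ((Walk.cons_isPath_iff _ _).mp hpath).2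
  have hbt2 : b ∉ t2.support := ((Walk.cons_isPath_iff _ _).mp hpath1).2
  have hcq : c ∉ q.support := ((Walk.cons_isPath_iff _ _).mp hpath2).2
  have hdt1 : d ∈ t1.support := by simp [ht1, ht2]
  have hdt2 : d ∈ t2.support := by simp [ht2]
  have had : a ≠ d := fun h => hat1 (h ▸ hdt1)
  have hbd : b ≠ d := fun h => hbt2 (h ▸ hdt2)
  have hsupp : ∀ x : Σ i : Fin t, Fin (r i), x ∈ p.support ↔
      x = a ∨ x ∈ t1.support := by intro x; simp [hp]
  have ha : a ∈ p.support := p.start_mem_support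
  have hb : b ∈ p.support := by rw [hsupp]; right; exact t1.start_mem_support
  have hc : c ∈ p.support := by rw [hsupp]; right; simp [ht1]
  have hd : d ∈ p.support := by rw [hsupp]; right; exact hdt1
  -- adjacency in p's subgraph implies edge membership
  have key : ∀ x y : Σ i : Fin t, Fin (r i), x ∈ p.support → y ∈ p.support →
      (G).Adj x y → s(x, y) ∈ p.edges := by
    intro x y hx hy hxy
    have := (hind x y hx hy).mp hxy
    rwa [← Subgraph.mem_edgeSet, Walk.mem_edges_toSubgraph] at this
  -- a.1 = c.1
  have hac1 : a.1 = c.1 := by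
    by_contra hne
    have := key a c ha hc ((adj_iff a c).mpr hne)
    rw [hp, Walk.edges_cons, List.mem_cons] at this
    rcases this with h' | h'
    · rw [Sym2.eq_iff] at h'
      rcases h' with ⟨_, h'⟩ | ⟨h', _⟩
      · exact h2.ne h'.symm
      · exact hat1 (h' ▸ t1.start_mem_support)
    · exact hat1 (t1.fst_mem_support_of_mem_edges h')
  -- a.1 = d.1
  have had1 : a.1 = d.1 := by
    by_contra hne
    have := key a d ha hd ((adj_iff a d).mpr hne)
    rw [hp, Walk.edges_cons, List.mem_cons] at this
    rcases this with h' | h'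
    · rw [Sym2.eq_iff] at h'
      rcases h' with ⟨_, h'⟩ | ⟨h', _⟩
      · exact hbd h'.symm
      · exact hat1 (h' ▸ t1.start_mem_support)
    · exact hat1 (t1.fst_mem_support_of_mem_edges h')
  -- b.1 = d.1
  have hbd1 : b.1 = d.1 := by
    by_contra hne
    have := key b d hb hd ((adj_iff b d).mpr hne)
    rw [hp, Walk.edges_cons, List.mem_cons] at this
    rcases this with h' | h'
    · rw [Sym2.eq_iff] at h'
      rcases h' with ⟨h'', _⟩ | ⟨_, h''⟩
      · exact h1.ne h''.symm
      · exact had h''.symm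
    · rw [ht1, Walk.edges_cons, List.mem_cons] at h'
      rcases h' with h' | h'
      · rw [Sym2.eq_iff] at h'
        rcases h' with ⟨_, h''⟩ | ⟨h'', _⟩
        · exact h3.ne h''.symm
        · exact h2.ne h''
      · exact hbt2 (t2.fst_mem_support_of_mem_edges h')
  exact (adj_iff c d).mp h3 (by rw [← hac1, had1])

-- in an induced path a-b-c, the endpoints are in the same part
lemma ends_same {a b c : Σ i : Fin t, Fin (r i)} (h1 : (G).Adj a b) (h2 : (G).Adj b c)
    (hp : IsInducedPathW G (Walk.cons h1 (Walk.cons h2 Walk.nil))) : a.1 = c.1 := by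
  obtain ⟨hpath, hind⟩ := hp
  by_contra hne
  have hac : a ≠ c := by
    have := hpath.support_nodup
    simp only [Walk.support_cons, Walk.support_nil, List.nodup_cons] at this
    intro h; exact this.1 (by simp [h])
  have := (hind a c (by simp) (by simp)).mp ((adj_iff a c).mpr hne)
  rw [← Subgraph.mem_edgeSet, Walk.mem_edges_toSubgraph] at this
  simp only [Walk.edges_cons, Walk.edges_nil, List.mem_cons, List.not_mem_nil, or_false] at this
  rcases this with h' | h'
  · rw [Sym2.eq_iff] at h'
    rcases h' with ⟨_, h''⟩ | ⟨h'', _⟩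
    · exact h2.ne h''.symm
    · exact h1.ne h''
  · rw [Sym2.eq_iff] at h'
    rcases h' with ⟨h'', _⟩ | ⟨_, h''⟩
    · exact h1.ne h''
    · exact h2.ne h''.symm

lemma ncard_le_one_of_subset_singleton {α : Type*} {s : Set α} {x : α} (h : s ⊆ {x}) :
    s.ncard ≤ 1 :=
  (Set.ncard_le_ncard h (Set.finite_singleton x)).trans_eq (Set.ncard_singleton x)

lemma ncard_le_two_of_subset_pair {α : Type*} {s : Set α} {x y : α} (h : s ⊆ {x, y}) :
    s.ncard ≤ 2 := by
  refine (Set.ncard_le_ncard h ((Set.finite_singleton y).insert x)).trans ?_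
  refine (Set.ncard_insert_le x {y}).trans ?_
  simp

lemma isMpSet_of (S : Set (Σ i : Fin t, Fin (r i)))
    (h : ∀ a b c : Σ i : Fin t, Fin (r i), a.1 = c.1 → b.1 ≠ a.1 → a ≠ c →
      (S ∩ {a, b, c}).ncard ≤ 2) : IsMpSet G S := by
  intro u v p hp
  cases p with
  | nil =>
    refine le_trans (ncard_le_one_of_subset_singleton (x := u) ?_) one_le_two
    intro x hx
    simpa using hx.2
  | cons h1 p1 =>
    rename_i m
    cases p1 with
    | nil =>
      refine ncard_le_two_of_subset_pair (x := u) (y := v) ?_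
      intro x hx
      simpa using hx.2
    | cons h2 p2 =>
      rename_i m2
      cases p2 with
      | nil =>
        have hsupp : {x : Σ i : Fin t, Fin (r i) | x ∈ (Walk.cons h1 (Walk.cons h2 Walk.nil)).support}
            = {u, m, v} := by
          ext x; simp [Set.mem_insert_iff]
        rw [hsupp]
        have hb1 : m.1 ≠ u.1 := ((adj_iff u m).mp h1).symm
        have huc : u ≠ v := by
          have := hp.1.support_nodup
          simp only [Walk.support_cons, Walk.support_nil, List.nodup_cons] at this
          intro h'; exact this.1 (by simp [h'])
        exact h u m v (ends_same h1 h2 hp) hb1 huc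
      | cons h3 q =>
        exact absurd hp (no_long h1 h2 h3 q)

lemma part_isMpSet (i0 : Fin t) : IsMpSet G {x : Σ i : Fin t, Fin (r i) | x.1 = i0} := by
  apply isMpSet_of
  intro a b c hac hba _
  by_cases hb : b.1 = i0
  · refine le_trans (ncard_le_one_of_subset_singleton (x := b) ?_) one_le_two
    rintro x ⟨hxS, hx⟩
    have hxS' : x.1 = i0 := hxS
    rcases hx with rfl | rfl | rfl
    · exact (hba (hb.trans hxS'.symm)).elim
    · rfl
    · exact (hba ((hb.trans hxS'.symm).trans hac.symm)).elim
  · refine ncard_le_two_of_subset_pair (x := a) (y := c) ?_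
    rintro x ⟨hxS, hx⟩
    have hxS' : x.1 = i0 := hxS
    rcases hx with rfl | rfl | rfl
    · exact Set.mem_insert _ _
    · exact (hb hxS').elim
    · exact Set.mem_insert_of_mem _ rfl

lemma transversal_isMpSet (hr : ∀ i, 1 ≤ r i) :
    IsMpSet G (Set.range fun i : Fin t => (⟨i, ⟨0, hr i⟩⟩ : Σ i : Fin t, Fin (r i))) := by
  set f : Fin t → Σ i : Fin t, Fin (r i) := fun i => ⟨i, ⟨0, hr i⟩⟩ with hf
  have hmem : ∀ x : Σ i : Fin t, Fin (r i), x ∈ Set.range f → x = f x.1 := by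
    rintro x ⟨i, rfl⟩; rfl
  apply isMpSet_of
  intro a b c hac _ hanec
  by_cases ha : a ∈ Set.range f
  · refine ncard_le_two_of_subset_pair (x := a) (y := b) ?_
    rintro x ⟨hxS, hx⟩
    rcases hx with rfl | rfl | rfl
    · exact Set.mem_insert _ _
    · exact Set.mem_insert_of_mem _ rfl
    · refine (hanec ?_).elim
      rw [hmem a ha, hmem x hxS, hac]
  · refine ncard_le_two_of_subset_pair (x := b) (y := c) ?_
    rintro x ⟨hxS, hx⟩
    rcases hx with rfl | rfl | rfl
    · exact (ha hxS).elim
    · exact Set.mem_insert _ _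
    · exact Set.mem_insert_of_mem _ rfl

lemma part_ncard (i0 : Fin t) : {x : Σ i : Fin t, Fin (r i) | x.1 = i0}.ncard = r i0 := by
  have he : {x : Σ i : Fin t, Fin (r i) | x.1 = i0}
      = Set.range (fun y : Fin (r i0) => (⟨i0, y⟩ : Σ i : Fin t, Fin (r i))) := by
    ext ⟨j, y⟩
    constructor
    · rintro (rfl : j = i0); exact ⟨y, rfl⟩
    · rintro ⟨z, hz⟩; exact (congrArg Sigma.fst hz).symm
  have hinj : Function.Injective fun y : Fin (r i0) => (⟨i0, y⟩ : Σ i : Fin t, Fin (r i)) :=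
    fun y z h => by simpa using h
  rw [he, ← Set.image_univ, Set.ncard_image_of_injective _ hinj,
    Set.ncard_univ, Nat.card_eq_fintype_card, Fintype.card_fin]

lemma transversal_ncard (hr : ∀ i, 1 ≤ r i) :
    (Set.range fun i : Fin t => (⟨i, ⟨0, hr i⟩⟩ : Σ i : Fin t, Fin (r i))).ncard = t := by
  rw [← Set.image_univ, Set.ncard_image_of_injective _
    (fun i j h => by exact congrArg Sigma.fst h), Set.ncard_univ, Nat.card_eq_fintype_card,
    Fintype.card_fin]

lemma mp_card_le (ht : 0 < t) (hmono : ∀ i j : Fin t, i ≤ j → r j ≤ r i)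
    (S : Set (Σ i : Fin t, Fin (r i))) (hS : IsMpSet G S) :
    S.ncard ≤ max (r ⟨0, ht⟩) t := by
  by_cases hex : ∃ a ∈ S, ∃ c ∈ S, a ≠ c ∧ a.1 = c.1
  · obtain ⟨a, haS, c, hcS, hanec, hac⟩ := hex
    have hsub : S ⊆ {x | x.1 = a.1} := by
      intro b hbS
      by_contra hb
      have hb' : b.1 ≠ a.1 := hb
      have hab : (G).Adj a b := (adj_iff a b).mpr (Ne.symm hb')
      have hbc : (G).Adj b c := (adj_iff b c).mpr (fun h => hb' (h.trans hac.symm))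
      set w : (G).Walk a c := Walk.cons hab (Walk.cons hbc Walk.nil) with hw
      have hsupp : ∀ x : Σ i : Fin t, Fin (r i), x ∈ w.support ↔ x = a ∨ x = b ∨ x = c := by
        intro x; simp [hw]
      have hip : IsInducedPathW G w := by
        constructor
        · rw [Walk.isPath_def]
          simp [hw, hab.ne, hbc.ne, hanec]
        · intro x y hx hy
          rw [hsupp] at hx hy
          have hsub_adj : ∀ z z' : Σ i : Fin t, Fin (r i),
              w.toSubgraph.Adj z z' ↔ s(a, b) = s(z, z') ∨ s(b, c) = s(z, z') := by
            intro z z'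
            simp [hw, Walk.toSubgraph, Subgraph.sup_adj, subgraphOfAdj_adj,
              singletonSubgraph_adj]
          rw [hsub_adj, adj_iff, Sym2.eq_iff, Sym2.eq_iff]
          have h1 : a.1 ≠ b.1 := (adj_iff a b).mp hab
          have h2 : b.1 ≠ c.1 := (adj_iff b c).mp hbc
          rcases hx with rfl | rfl | rfl <;> rcases hy with rfl | rfl | rfl <;>
            simp_all <;> tauto
      have h3 : (S ∩ {x | x ∈ w.support}).ncard ≤ 2 := hS w hip
      have habc : {a, b, c} ⊆ S ∩ {x | x ∈ w.support} := by
        rintro x (rfl | rfl | rfl)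
        · exact ⟨haS, by rw [Set.mem_setOf_eq, hsupp]; tauto⟩
        · exact ⟨hbS, by rw [Set.mem_setOf_eq, hsupp]; tauto⟩
        · exact ⟨hcS, by rw [Set.mem_setOf_eq, hsupp]; tauto⟩
      have h4 : ({a, b, c} : Set (Σ i : Fin t, Fin (r i))).ncard = 3 := by
        rw [Set.ncard_eq_three]
        exact ⟨a, b, c, hab.ne, hanec, hbc.ne, rfl⟩
      have := (h4 ▸ Set.ncard_le_ncard habc (Set.toFinite _)).trans h3
      omega
    calc S.ncard ≤ {x : Σ i : Fin t, Fin (r i) | x.1 = a.1}.ncard :=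
          Set.ncard_le_ncard hsub (Set.toFinite _)
      _ = r a.1 := part_ncard a.1
      _ ≤ r ⟨0, ht⟩ := hmono ⟨0, ht⟩ a.1 (by simp [Fin.le_def])
      _ ≤ max (r ⟨0, ht⟩) t := le_max_left _ _
  · push_neg at hex
    have hinj : Set.InjOn Sigma.fst S := by
      intro x hx y hy hxy
      by_contra hne
      exact hex x hx y hy hne hxy
    calc S.ncard = (Sigma.fst '' S).ncard := (Set.ncard_image_of_injOn hinj).symm
      _ ≤ (Set.univ : Set (Fin t)).ncard :=
          Set.ncard_le_ncard (Set.subset_univ _) (Set.toFinite _)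
      _ = t := by rw [Set.ncard_univ, Nat.card_eq_fintype_card, Fintype.card_fin]
      _ ≤ max (r ⟨0, ht⟩) t := le_max_right _ _

theorem completeMultipartite_mpNum (t : ℕ) (ht : 0 < t) (r : Fin t → ℕ)
    (hr : ∀ i, 1 ≤ r i) (hmono : ∀ i j : Fin t, i ≤ j → r j ≤ r i) :
    mpNum (completeMultipartiteGraph fun i => Fin (r i)) = max (r ⟨0, ht⟩) t := by
  have hub : ∀ n ∈ {n | ∃ S : Set (Σ i : Fin t, Fin (r i)),
      IsMpSet (completeMultipartiteGraph fun i => Fin (r i)) S ∧ S.ncard = n},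
      n ≤ max (r ⟨0, ht⟩) t := by
    rintro n ⟨S, hS, rfl⟩
    exact mp_card_le ht hmono S hS
  have hmem : max (r ⟨0, ht⟩) t ∈ {n | ∃ S : Set (Σ i : Fin t, Fin (r i)),
      IsMpSet (completeMultipartiteGraph fun i => Fin (r i)) S ∧ S.ncard = n} := by
    rcases le_total t (r ⟨0, ht⟩) with h | h
    · exact ⟨{x | x.1 = ⟨0, ht⟩}, part_isMpSet _,
        by rw [part_ncard]; exact (max_eq_left h).symm⟩
    · exact ⟨_, transversal_isMpSet hr,
        by rw [transversal_ncard hr]; exact (max_eq_right h).symm⟩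
  unfold mpNum
  exact le_antisymm (csSup_le ⟨_, hmem⟩ hub) (le_csSup ⟨_, hub⟩ hmem)
end

section
/- If a graph G satisfies mp(G) < gp(G), then the order of G is at least gp(G) + 2. -/
open SimpleGraph

section Aux

variable {V : Type*} {G : SimpleGraph V} {S : Set V}

lemma aux_ncard_le_two_of_subset_pair {T : Set V} {u v : V} (h : T ⊆ {u, v}) : T.ncard ≤ 2 := by
  have h1 := Set.ncard_le_ncard h (Set.toFinite _)
  have h2 : ({u, v} : Set V).ncard ≤ 2 := by
    refine le_trans (Set.ncard_insert_le _ _) ?_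
    simp [Set.ncard_singleton]
  omega

lemma aux_three_le_ncard {T : Set V} (hfin : T.Finite) {a b c : V} (ha : a ∈ T) (hb : b ∈ T)
    (hc : c ∈ T) (hab : a ≠ b) (hac : a ≠ c) (hbc : b ≠ c) : 3 ≤ T.ncard := by
  have hsub : ({a, b, c} : Set V) ⊆ T := by
    intro x hx
    rcases hx with rfl | rfl | rfl <;> assumption
  have h3 : ({a, b, c} : Set V).ncard = 3 := Set.ncard_eq_three.mpr ⟨a, b, c, hab, hac, hbc, rfl⟩
  have := Set.ncard_le_ncard hsub hfin
  omega

lemma aux_support_finite {u v : V} (p : G.Walk u v) : (S ∩ {x | x ∈ p.support}).Finite :=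
  Set.Finite.inter_of_right (p.support.finite_toSet) S

/-- A geodesic with three vertices of a gp-set : contradiction (triple pattern). -/
lemma gp_triple (hS : IsGpSet G S) {a b c : V} (ha : a ∈ S) (hb : b ∈ S) (hc : c ∈ S)
    (hab : G.Adj a b) (hbc : G.Adj b c) (hac : ¬ G.Adj a c) (hne : a ≠ c) : False := by
  set w : G.Walk a c := Walk.cons hab (Walk.cons hbc Walk.nil) with hw
  have hpath : w.IsPath := by
    simp [hw, Walk.isPath_def, hab.ne, hbc.ne, hne]
  have hd2 : G.dist a c ≤ 2 := by
    have := SimpleGraph.dist_le w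
    simpa [hw] using this
  have hd0 : G.dist a c ≠ 0 := by
    intro h0
    rcases SimpleGraph.dist_eq_zero_iff_eq_or_not_reachable.mp h0 with h | h
    · exact hne h
    · exact h w.reachable
  have hd1 : G.dist a c ≠ 1 := fun h1 => hac (SimpleGraph.dist_eq_one_iff_adj.mp h1)
  have hgeo : IsGeodesicW G w := ⟨hpath, by simp [hw]; omega⟩
  have hle := hS w hgeo
  have h3 : 3 ≤ (S ∩ {x | x ∈ w.support}).ncard := by
    refine aux_three_le_ncard (aux_support_finite w) (a := a) (b := b) (c := c) ?_ ?_ ?_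
      hab.ne hne hbc.ne
    · exact ⟨ha, by simp [hw]⟩
    · exact ⟨hb, by simp [hw]⟩
    · exact ⟨hc, by simp [hw]⟩
  omega

/-- A gp-set with pattern a - x - c - d (induced), a,c,d in S : contradiction. -/
lemma gp_quad (hS : IsGpSet G S) {a x c d : V} (ha : a ∈ S) (hc : c ∈ S) (hd : d ∈ S)
    (h1 : G.Adj a x) (h2 : G.Adj x c) (h3 : G.Adj c d)
    (hac : ¬ G.Adj a c) (had : ¬ G.Adj a d) (hxd : x ≠ d) (hadne : a ≠ d) (hacne : a ≠ c)
    (hmid : ∀ w : V, G.Adj a w → G.Adj w d → w ∈ S) : False := by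
  set w : G.Walk a d := Walk.cons h1 (Walk.cons h2 (Walk.cons h3 Walk.nil)) with hw
  have hpath : w.IsPath := by
    simp [hw, Walk.isPath_def, h1.ne, h2.ne, h3.ne, hxd, hadne, hacne]
  have hd3 : G.dist a d ≤ 3 := by
    have := SimpleGraph.dist_le w
    simpa [hw] using this
  have hd0 : G.dist a d ≠ 0 := by
    intro h0
    rcases SimpleGraph.dist_eq_zero_iff_eq_or_not_reachable.mp h0 with h | h
    · exact hadne h
    · exact h w.reachable
  have hd1 : G.dist a d ≠ 1 := fun h' => had (SimpleGraph.dist_eq_one_iff_adj.mp h')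
  rcases eq_or_ne (G.dist a d) 3 with hdist | hdist
  · -- w itself is a geodesic
    have hgeo : IsGeodesicW G w := ⟨hpath, by simp [hw, hdist]⟩
    have hle := hS w hgeo
    have h3' : 3 ≤ (S ∩ {x | x ∈ w.support}).ncard := by
      refine aux_three_le_ncard (aux_support_finite w) (a := a) (b := c) (c := d) ?_ ?_ ?_
        hacne hadne h3.ne
      · exact ⟨ha, by simp [hw]⟩
      · exact ⟨hc, by simp [hw]⟩
      · exact ⟨hd, by simp [hw]⟩
    omega
  · have hdist2 : G.dist a d = 2 := by omega
    obtain ⟨q, hq⟩ := w.reachable.exists_walk_length_eq_dist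
    rw [hdist2] at hq
    cases q with
    | nil => simp at hq
    | cons h' q' =>
      rename_i m
      cases q' with
      | nil => simp at hq
      | cons h'' q'' =>
        cases q'' with
        | cons h''' q''' => simp [Walk.length_cons] at hq
        | nil =>
          -- walk a - m - d
          have hmS : m ∈ S := hmid m h' h''
          set w2 : G.Walk a d := Walk.cons h' (Walk.cons h'' Walk.nil) with hw2
          have hpath2 : w2.IsPath := by
            simp [hw2, Walk.isPath_def, h'.ne, h''.ne, hadne]
          have hgeo2 : IsGeodesicW G w2 := ⟨hpath2, by simp [hw2, hdist2]⟩
          have hle := hS w2 hgeo2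
          have h3' : 3 ≤ (S ∩ {x | x ∈ w2.support}).ncard := by
            refine aux_three_le_ncard (aux_support_finite w2) (a := a) (b := m) (c := d) ?_ ?_ ?_
              h'.ne hadne h''.ne
            · exact ⟨ha, by simp [hw2]⟩
            · exact ⟨hmS, by simp [hw2]⟩
            · exact ⟨hd, by simp [hw2]⟩
          omega

/-- First-vertex non-adjacency: in an induced path `cons h q`, the first vertex is not
adjacent to any support vertex of `q` other than the second vertex. -/
lemma not_adj_first {u b v z : V} (hadj : G.Adj u b) {q : G.Walk b v}
    (hp : IsInducedPathW G (Walk.cons hadj q)) (hz : z ∈ q.support) (hzb : z ≠ b) :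
    ¬ G.Adj u z := by
  intro hA
  have h2 := (hp.2 u z (by simp) (by simp [hz])).mp hA
  have he : s(u, z) ∈ (Walk.cons hadj q).edges :=
    (Walk.mem_edges_toSubgraph _).mp (Subgraph.mem_edgeSet.mpr h2)
  rw [Walk.edges_cons] at he
  rcases List.mem_cons.mp he with he | he
  · rw [Sym2.eq_iff] at he
    rcases he with ⟨-, hzb'⟩ | ⟨hub, -⟩
    · exact hzb hzb'
    · exact hadj.ne hub
  · have hu : u ∈ q.support := q.fst_mem_support_of_mem_edges he
    have := (Walk.cons_isPath_iff hadj q).mp hp.1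
    exact this.2 hu

/-- Second-vertex non-adjacency: in an induced path u-b-c-..., the vertex b is not
adjacent to any support vertex of the remaining walk other than c. -/
lemma not_adj_second {u b c v z : V} (hadj : G.Adj u b) (hadj2 : G.Adj b c) {q : G.Walk c v}
    (hp : IsInducedPathW G (Walk.cons hadj (Walk.cons hadj2 q))) (hz : z ∈ q.support)
    (hzc : z ≠ c) : ¬ G.Adj b z := by
  intro hA
  have h2 := (hp.2 b z (by simp) (by simp [hz])).mp hA
  have he : s(b, z) ∈ (Walk.cons hadj (Walk.cons hadj2 q)).edges :=
    (Walk.mem_edges_toSubgraph _).mp (Subgraph.mem_edgeSet.mpr h2)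
  have hpath := hp.1
  rw [Walk.cons_isPath_iff] at hpath
  have hpath2 := hpath.1
  rw [Walk.cons_isPath_iff] at hpath2
  simp only [Walk.edges_cons] at he
  rcases List.mem_cons.mp he with he | he
  · -- s(b,z) = s(u,b)
    rw [Sym2.eq_iff] at he
    rcases he with ⟨hbu, -⟩ | ⟨-, hzu⟩
    · exact hadj.ne hbu.symm
    · -- z = u, but u ∉ (cons hadj2 q).support ⊇ q.support
      apply hpath.2
      rw [Walk.support_cons]
      exact List.mem_cons_of_mem _ (hzu ▸ hz)
  · rcases List.mem_cons.mp he with he | he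
    · rw [Sym2.eq_iff] at he
      rcases he with ⟨-, hzc'⟩ | ⟨hbc', -⟩
      · exact hzc hzc'
      · exact hadj2.ne hbc'
    · have hb : b ∈ q.support := q.fst_mem_support_of_mem_edges he
      exact hpath2.2 hb

/-- The tail of an induced path is an induced path. -/
lemma tail_induced {u b v : V} {hadj : G.Adj u b} {q : G.Walk b v}
    (hp : IsInducedPathW G (Walk.cons hadj q)) : IsInducedPathW G q := by
  obtain ⟨hpath, hind⟩ := hp
  rw [Walk.cons_isPath_iff] at hpath
  refine ⟨hpath.1, fun a b' ha hb' => ⟨fun hA => ?_, fun hA => hA.adj_sub⟩⟩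
  have h2 := (hind a b' (by simp [ha]) (by simp [hb'])).mp hA
  have he : s(a, b') ∈ (Walk.cons hadj q).edges :=
    (Walk.mem_edges_toSubgraph _).mp (Subgraph.mem_edgeSet.mpr h2)
  rw [Walk.edges_cons] at he
  rcases List.mem_cons.mp he with he | he
  · exfalso
    rw [Sym2.eq_iff] at he
    rcases he with ⟨hau, -⟩ | ⟨-, hbu⟩
    · exact hpath.2 (hau ▸ ha)
    · exact hpath.2 (hbu ▸ hb')
  · exact Subgraph.mem_edgeSet.mp ((Walk.mem_edges_toSubgraph q).mpr he)

/-- Main lemma: a gp-set whose complement has at most one vertex is an mp-set. -/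
lemma mp_of_gp (hS : IsGpSet G S) (hone : ∀ ⦃y z : V⦄, y ∉ S → z ∉ S → y = z) :
    IsMpSet G S := by
  suffices H : ∀ n : ℕ, ∀ (u v : V) (p : G.Walk u v), p.length = n → IsInducedPathW G p →
      (S ∩ {x | x ∈ p.support}).ncard ≤ 2 by
    intro u v p hp
    exact H p.length u v p rfl hp
  intro n
  induction n using Nat.strong_induction_on with
  | _ n IH =>
    intro u v p hlen hp
    by_contra hcon
    push_neg at hcon
    cases p with
    | nil =>
      have : (S ∩ {x | x ∈ (Walk.nil : G.Walk u u).support}).ncard ≤ 2 := by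
        apply aux_ncard_le_two_of_subset_pair (u := u) (v := u)
        intro z hz
        simp only [Walk.support_nil, List.mem_singleton, Set.mem_inter_iff, Set.mem_setOf_eq] at hz
        simp [hz.2]
      omega
    | cons hadj q =>
      rename_i b
      by_cases hu : u ∈ S
      · -- structural case analysis on q
        have hnd := hp.1.support_nodup
        cases q with
        | nil =>
          -- support = [u, v]
          have : (S ∩ {x | x ∈ (Walk.cons hadj Walk.nil).support}).ncard ≤ 2 := by
            apply aux_ncard_le_two_of_subset_pair (u := u) (v := v)
            intro z hz
            simp only [Walk.support_cons, Walk.support_nil, Set.mem_inter_iff,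
              Set.mem_setOf_eq, List.mem_cons, List.not_mem_nil, or_false] at hz
            rcases hz.2 with rfl | rfl <;> simp
          omega
        | cons hadj2 q2 =>
          rename_i c
          cases q2 with
          | nil =>
            -- p = u - b - v, support [u,b,v] ; need b, v ∈ S
            simp only [Walk.support_cons, Walk.support_nil, List.nodup_cons, List.mem_cons,
              List.not_mem_nil, or_false, not_or, List.nodup_nil, and_true,
              List.mem_singleton] at hnd
            obtain ⟨⟨hub', huv⟩, hbv, -⟩ := hnd
            have hb : b ∈ S := by
              by_contra hbS
              have : (S ∩ {x | x ∈ (Walk.cons hadj (Walk.cons hadj2 Walk.nil)).support}).ncard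
                  ≤ 2 := by
                apply aux_ncard_le_two_of_subset_pair (u := u) (v := v)
                intro z hz
                simp only [Walk.support_cons, Walk.support_nil, Set.mem_inter_iff,
                  Set.mem_setOf_eq, List.mem_cons, List.not_mem_nil, or_false] at hz
                rcases hz.2 with rfl | rfl | rfl
                · simp
                · exact absurd hz.1 hbS
                · simp
              omega
            have hc : v ∈ S := by
              by_contra hcS
              have : (S ∩ {x | x ∈ (Walk.cons hadj (Walk.cons hadj2 Walk.nil)).support}).ncard
                  ≤ 2 := by
                apply aux_ncard_le_two_of_subset_pair (u := u) (v := b)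
                intro z hz
                simp only [Walk.support_cons, Walk.support_nil, Set.mem_inter_iff,
                  Set.mem_setOf_eq, List.mem_cons, List.not_mem_nil, or_false] at hz
                rcases hz.2 with rfl | rfl | rfl
                · simp
                · simp
                · exact absurd hz.1 hcS
              omega
            exact gp_triple hS hu hb hc hadj hadj2
              (not_adj_first hadj hp (by simp) (fun h => hbv h.symm)) huv
          | cons hadj3 q3 =>
            rename_i d
            -- vertices u, b, c, d, ...
            simp only [Walk.support_cons, List.nodup_cons, List.mem_cons, not_or] at hnd
            obtain ⟨⟨hub', huc, huq⟩, ⟨hbc, hbq⟩, hcq, -⟩ := hnd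
            have hud : ¬ u = d := fun h => huq (h ▸ q3.start_mem_support)
            have hbd : ¬ b = d := fun h => hbq (h ▸ q3.start_mem_support)
            have hcd' : ¬ c = d := fun h => hcq (h ▸ q3.start_mem_support)
            have hub : u ≠ b := hadj.ne
            have hcd : c ≠ d := hadj3.ne
            -- non-adjacency facts
            have hnuc : ¬ G.Adj u c := not_adj_first hadj hp (by simp) (fun h => hbc h.symm)
            have hnud : ¬ G.Adj u d := not_adj_first hadj hp
              (by simp [Walk.start_mem_support]) (fun h => hbd h.symm)
            have hnbd : ¬ G.Adj b d := not_adj_second hadj hadj2 hp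
              (by simp [Walk.start_mem_support])
              (fun h => hcd' h.symm)
            by_cases hbS : b ∈ S
            · by_cases hcS : c ∈ S
              · exact gp_triple hS hu hbS hcS hadj hadj2 hnuc huc
              · -- c ∉ S : pattern d - c - b - u reversed quad
                have hdS : d ∈ S := by
                  by_contra hdS
                  exact hcd' (hone hcS hdS)
                refine gp_quad hS hdS hbS hu hadj3.symm hadj2.symm hadj.symm
                  (fun h => hnbd h.symm) (fun h => hnud h.symm) (fun h => huc h.symm)
                  (fun h => hud h.symm) (fun h => hbd h.symm) ?_
                intro w hw1 hw2
                by_contra hwS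
                have : w = c := hone hwS hcS
                exact hnuc (this ▸ hw2).symm
            · -- b ∉ S : pattern u - b - c - d quad
              have hcS : c ∈ S := by
                by_contra hcS
                exact hbc (hone hbS hcS)
              have hdS : d ∈ S := by
                by_contra hdS
                exact hbd (hone hbS hdS)
              refine gp_quad hS hu hcS hdS hadj hadj2 hadj3 hnuc hnud hbd hud huc ?_
              intro w hw1 hw2
              by_contra hwS
              have : w = b := hone hwS hbS
              exact hnbd (this ▸ hw2)
      · -- u ∉ S : recurse into the tail
        have hqind : IsInducedPathW G q := tail_induced hp
        have hql : q.length < n := by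
          rw [← hlen]
          simp [Walk.length_cons]
        have hle := IH q.length hql b v q rfl hqind
        have heq : S ∩ {x | x ∈ (Walk.cons hadj q).support} = S ∩ {x | x ∈ q.support} := by
          ext z
          simp only [Set.mem_inter_iff, Set.mem_setOf_eq, Walk.support_cons, List.mem_cons]
          constructor
          · rintro ⟨hzS, rfl | hz⟩
            · exact absurd hzS hu
            · exact ⟨hzS, hz⟩
          · rintro ⟨hzS, hz⟩
            exact ⟨hzS, Or.inr hz⟩
        rw [heq] at hcon
        omega

end Aux

theorem order_ge_gpNum_add_two {V : Type*} [Fintype V] (G : SimpleGraph V)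
    (h : mpNum G < gpNum G) : gpNum G + 2 ≤ Fintype.card V := by
  by_contra hcon
  push_neg at hcon
  have hcard : ∀ T : Set V, T.ncard ≤ Fintype.card V := by
    intro T
    have := Set.ncard_le_ncard (Set.subset_univ T) Set.finite_univ
    simpa [Set.ncard_univ] using this
  have hbddGp : BddAbove {n | ∃ S : Set V, IsGpSet G S ∧ S.ncard = n} := by
    refine ⟨Fintype.card V, ?_⟩
    rintro n ⟨S, -, rfl⟩
    exact hcard S
  have hbddMp : BddAbove {n | ∃ S : Set V, IsMpSet G S ∧ S.ncard = n} := by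
    refine ⟨Fintype.card V, ?_⟩
    rintro n ⟨S, -, rfl⟩
    exact hcard S
  have hne : {n | ∃ S : Set V, IsGpSet G S ∧ S.ncard = n}.Nonempty := by
    refine ⟨0, ∅, fun u v p hp => ?_, by simp⟩
    simp
  have hmem : gpNum G ∈ {n | ∃ S : Set V, IsGpSet G S ∧ S.ncard = n} := Nat.sSup_mem hne hbddGp
  obtain ⟨S, hSgp, hScard⟩ := hmem
  have hone : ∀ ⦃y z : V⦄, y ∉ S → z ∉ S → y = z := by
    intro y z hy hz
    by_contra hyz
    have h1 : (insert y (insert z S)).ncard ≤ Fintype.card V := hcard _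
    rw [Set.ncard_insert_of_notMem (by simp [hy, hyz]) (Set.toFinite _),
      Set.ncard_insert_of_notMem hz (Set.toFinite _)] at h1
    omega
  have hmp : IsMpSet G S := mp_of_gp hSgp hone
  have hle : gpNum G ≤ mpNum G := by
    rw [← hScard]
    exact le_csSup hbddMp ⟨S, hmp, rfl⟩
  omega
end

section
/- For every r ≥ 3, there exists a connected graph of order 3r+1 with monophonic position number 2 and general position number 2r. -/
open SimpleGraph

/-!
The pagoda graph `Pag(r)` is a witness. Its vertices come in layers `A, B, C, {x}` and edges only
join consecutive layers, so it is bipartite and triangle-free.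

`mp = 2`: any three vertices lie on a common induced path; this is an explicit case check, where
`r ≥ 3` supplies an index different from two given ones.

`gp ≥ 2r`: any two vertices are joined by a walk of length at most 3, so every geodesic has at
most four vertices, and an independent set such as `A ∪ C` contains at most two of them.

`gp ≤ 2r`: if `u, w` are non-adjacent neighbours of `z`, then `u z w` is a geodesic; in a
triangle-free graph this forces every vertex of a general position set to have at most one
neighbour in the set. In `Pag(r)` such a set meeting both `B` and `A ∪ C` has at most six vertices
(one neighbour of some `bᵢ` and one of some `aⱼ` or `cⱼ` besides `aᵢ, cᵢ, bⱼ, x`); otherwise it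
lies in `B ∪ {x}`, or in `A ∪ C ∪ {x}` with at most one vertex of `C` when it contains `x`.
-/

variable {V W : Type*} {G : SimpleGraph V} {H : SimpleGraph W}

lemma isInducedPathW_iff {u v : V} (p : G.Walk u v) :
    IsInducedPathW G p ↔
      p.IsPath ∧ ∀ a ∈ p.support, ∀ b ∈ p.support, G.Adj a b → s(a, b) ∈ p.edges := by
  simp only [IsInducedPathW, Walk.adj_toSubgraph_iff_mem_edges]
  refine and_congr_right fun _ => ⟨fun h a ha b hb => (h a b ha hb).mp,
    fun h a b ha hb => ⟨h a ha b hb, p.adj_of_mem_edges⟩⟩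

def IsInducedPathList (G : SimpleGraph V) : List V → Prop
  | [] => False
  | [_] => True
  | a :: b :: l => G.Adj a b ∧ a ∉ l ∧ (∀ c ∈ l, ¬G.Adj a c) ∧ IsInducedPathList G (b :: l)

lemma IsInducedPathList.exists_walk_cons :
    ∀ {a : V} {l : List V}, IsInducedPathList G (a :: l) →
      ∃ (v : V) (p : G.Walk a v), IsInducedPathW G p ∧ p.support = a :: l
  | a, [], _ => ⟨a, .nil, (isInducedPathW_iff _).mpr ⟨.nil, by simp⟩, rfl⟩
  | a, b :: l, ⟨hab, hal, hnadj, hl⟩ => by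
    obtain ⟨v, q, hq, hsupp⟩ := exists_walk_cons hl
    rw [isInducedPathW_iff] at hq
    have haq : a ∉ q.support := by simp [hsupp, hab.ne, hal]
    refine ⟨v, .cons hab q, (isInducedPathW_iff _).mpr ⟨(Walk.cons_isPath_iff _ _).mpr
      ⟨hq.1, haq⟩, ?_⟩, by simp [hsupp]⟩
    have hadj_a : ∀ y ∈ q.support, G.Adj a y → y = b := by
      simp only [hsupp, List.mem_cons]
      rintro y (rfl | hy) h
      exacts [rfl, absurd h (hnadj y hy)]
    simp only [Walk.support_cons, Walk.edges_cons, List.mem_cons]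
    rintro x (rfl | hx) y (rfl | hy) h
    · exact absurd h (G.loopless.irrefl _)
    · exact .inl (by rw [hadj_a y hy h])
    · exact .inl (by rw [hadj_a x hx h.symm, Sym2.eq_swap])
    · exact .inr (hq.2 x hx y hy h)

lemma IsInducedPathList.exists_walk {l : List V} (hl : IsInducedPathList G l) :
    ∃ (u v : V) (p : G.Walk u v), IsInducedPathW G p ∧ p.support = l := by
  cases l with
  | nil => exact hl.elim
  | cons a l => exact ⟨a, hl.exists_walk_cons⟩

def CoveredByInducedPath (G : SimpleGraph V) (T : Set V) : Prop :=
  ∃ l : List V, (∀ v ∈ T, v ∈ l) ∧ IsInducedPathList G l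

namespace SimpleGraph.Iso

variable (f : G ≃g H)

lemma dist_le (u v : V) : H.dist (f u) (f v) ≤ G.dist u v := by
  by_cases huv : G.Reachable u v
  · obtain ⟨p, hp⟩ := huv.exists_walk_length_eq_dist
    simpa [hp] using H.dist_le (p.map f.toHom)
  · rw [dist_eq_zero_of_not_reachable (mt f.reachable_iff.mp huv)]
    exact Nat.zero_le _

lemma dist_eq (u v : V) : H.dist (f u) (f v) = G.dist u v :=
  (f.dist_le u v).antisymm (by simpa using f.symm.dist_le (f u) (f v))

lemma image_inter_support_map_symm (S : Set V) {u v : W} (q : H.Walk u v) :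
    f '' (S ∩ {x | x ∈ (q.map f.symm.toHom).support}) = f '' S ∩ {y | y ∈ q.support} := by
  rw [Set.image_inter f.injective]
  congr 1
  ext y
  simp [Walk.support_map]

end SimpleGraph.Iso

lemma IsInducedPathW.map_iso {u v : V} {p : G.Walk u v} (hp : IsInducedPathW G p) (f : G ≃g H) :
    IsInducedPathW H (p.map f.toHom) := by
  rw [isInducedPathW_iff] at hp ⊢
  refine ⟨hp.1.map f.injective, ?_⟩
  simp only [Walk.support_map, Walk.edges_map, List.mem_map]
  rintro _ ⟨a, ha, rfl⟩ _ ⟨b, hb, rfl⟩ h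
  exact ⟨s(a, b), hp.2 a ha b hb (f.map_adj_iff.mp h), rfl⟩

lemma IsGeodesicW.map_iso {u v : V} {p : G.Walk u v} (hp : IsGeodesicW G p) (f : G ≃g H) :
    IsGeodesicW H (p.map f.toHom) :=
  ⟨hp.1.map f.injective, by rw [Walk.length_map, hp.2]; exact (f.dist_eq u v).symm⟩

lemma IsMpSet.image_iso {S : Set V} (hS : IsMpSet G S) (f : G ≃g H) : IsMpSet H (f '' S) := by
  intro u v q hq
  rw [← f.image_inter_support_map_symm, Set.ncard_image_of_injective _ f.injective]
  exact hS _ (hq.map_iso f.symm)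

lemma IsGpSet.image_iso {S : Set V} (hS : IsGpSet G S) (f : G ≃g H) : IsGpSet H (f '' S) := by
  intro u v q hq
  rw [← f.image_inter_support_map_symm, Set.ncard_image_of_injective _ f.injective]
  exact hS _ (hq.map_iso f.symm)

lemma setOf_ncard_eq_of_equiv (e : V ≃ W) {P : Set V → Prop} {Q : Set W → Prop}
    (hPQ : ∀ S, P S → Q (e '' S)) (hQP : ∀ T, Q T → P (e.symm '' T)) :
    {n | ∃ S, P S ∧ S.ncard = n} = {n | ∃ T, Q T ∧ T.ncard = n} := by
  ext n
  constructor
  · rintro ⟨S, hS, rfl⟩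
    exact ⟨e '' S, hPQ S hS, Set.ncard_image_of_injective _ e.injective⟩
  · rintro ⟨T, hT, rfl⟩
    exact ⟨e.symm '' T, hQP T hT, Set.ncard_image_of_injective _ e.symm.injective⟩

lemma SimpleGraph.Iso.mpNum_eq (f : G ≃g H) : mpNum G = mpNum H :=
  congrArg sSup <| setOf_ncard_eq_of_equiv f.toEquiv (fun _ hS => hS.image_iso f)
    (fun _ hT => hT.image_iso f.symm)

lemma SimpleGraph.Iso.gpNum_eq (f : G ≃g H) : gpNum G = gpNum H :=
  congrArg sSup <| setOf_ncard_eq_of_equiv f.toEquiv (fun _ hS => hS.image_iso f)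
    (fun _ hT => hT.image_iso f.symm)

lemma ncard_le_ncard_inter_support {S : Set V} {u v : V} (p : G.Walk u v) {T : Set V}
    (hT : T ⊆ S ∩ {x | x ∈ p.support}) : T.ncard ≤ (S ∩ {x | x ∈ p.support}).ncard :=
  Set.ncard_le_ncard hT ((List.finite_toSet _).inter_of_right _)

lemma IsMpSet.ncard_le_two (hG : ∀ T : Set V, T.ncard = 3 → CoveredByInducedPath G T)
    {S : Set V} (hS : IsMpSet G S) : S.ncard ≤ 2 := by
  by_contra! h
  obtain ⟨T, hTS, hT⟩ := Set.exists_subset_card_eq (show 3 ≤ S.ncard by omega)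
  obtain ⟨l, hTl, hl⟩ := hG T hT
  obtain ⟨u, v, p, hp, rfl⟩ := hl.exists_walk
  have hle := ncard_le_ncard_inter_support p fun t ht => ⟨hTS ht, hTl t ht⟩
  have hmp := hS p hp
  omega

lemma mpNum_eq_two (hV : ∃ u v : V, u ≠ v)
    (hG : ∀ T : Set V, T.ncard = 3 → CoveredByInducedPath G T) : mpNum G = 2 := by
  obtain ⟨u, v, huv⟩ := hV
  refine IsGreatest.csSup_eq ⟨⟨{u, v}, fun _ _ p _ => ?_, Set.ncard_pair huv⟩, ?_⟩
  · exact (Set.ncard_le_ncard Set.inter_subset_left).trans (Set.ncard_pair huv).le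
  · rintro n ⟨S, hS, rfl⟩
    exact hS.ncard_le_two hG

lemma SimpleGraph.IsIndepSet.ncard_inter_pair_le_one {S : Set V} (hS : G.IsIndepSet S) {u v : V}
    (huv : G.Adj u v ∨ u = v) : (S ∩ {u, v}).ncard ≤ 1 := by
  rw [Set.ncard_le_one ((Set.toFinite _).inter_of_right _)]
  rintro x ⟨hxS, hx⟩ y ⟨hyS, hy⟩
  by_contra hxy
  refine hS hxS hyS hxy ?_
  rcases huv with h | rfl <;> rcases hx with rfl | rfl <;> rcases hy with rfl | rfl <;>
    first | exact absurd rfl hxy | exact h | exact h.symm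

lemma SimpleGraph.Walk.adj_getVert_succ_or_eq {u v : V} (p : G.Walk u v) (i : ℕ) :
    G.Adj (p.getVert i) (p.getVert (i + 1)) ∨ p.getVert i = p.getVert (i + 1) := by
  by_cases hi : i < p.length
  · exact .inl (p.adj_getVert_succ hi)
  · rw [p.getVert_of_length_le (by omega), p.getVert_of_length_le (by omega)]
    exact .inr rfl

lemma SimpleGraph.IsIndepSet.ncard_inter_support_le_two {S : Set V} (hS : G.IsIndepSet S)
    {u v : V} (p : G.Walk u v) (hp : p.length ≤ 3) : (S ∩ {x | x ∈ p.support}).ncard ≤ 2 := by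
  have hsupp : {x | x ∈ p.support} ⊆
      {p.getVert 0, p.getVert 1} ∪ {p.getVert 2, p.getVert 3} := by
    intro y hy
    obtain ⟨n, rfl, hn⟩ := Walk.mem_support_iff_exists_getVert.mp hy
    have : n ≤ 3 := hn.trans hp
    interval_cases n <;> simp
  calc (S ∩ {x | x ∈ p.support}).ncard
      ≤ (S ∩ {p.getVert 0, p.getVert 1} ∪ S ∩ {p.getVert 2, p.getVert 3}).ncard := by
        rw [← Set.inter_union_distrib_left]
        exact Set.ncard_le_ncard (Set.inter_subset_inter_right _ hsupp)
    _ ≤ (S ∩ {p.getVert 0, p.getVert 1}).ncard + (S ∩ {p.getVert 2, p.getVert 3}).ncard :=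
        Set.ncard_union_le _ _
    _ ≤ 1 + 1 := add_le_add (hS.ncard_inter_pair_le_one (p.adj_getVert_succ_or_eq 0))
        (hS.ncard_inter_pair_le_one (p.adj_getVert_succ_or_eq 2))

lemma IsGpSet.of_isIndepSet (hG : ∀ u v : V, G.dist u v ≤ 3) {S : Set V}
    (hS : G.IsIndepSet S) : IsGpSet G S :=
  fun u v p hp => hS.ncard_inter_support_le_two p (hp.2 ▸ hG u v)

lemma IsGpSet.subsingleton_inter_neighborSet (hG : G.CliqueFree 3) {S : Set V}
    (hS : IsGpSet G S) {z : V} (hz : z ∈ S) : (S ∩ G.neighborSet z).Subsingleton := by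
  classical
  rintro u ⟨hu, hzu : G.Adj z u⟩ w ⟨hw, hzw : G.Adj z w⟩
  by_contra huw
  have hnadj : ¬G.Adj u w := fun h => hG {z, u, w} (is3Clique_triple_iff.mpr ⟨hzu, hzw, h⟩)
  let p : G.Walk u w := .cons (G.adj_symm hzu) (.cons hzw .nil)
  have hdist : G.dist u w = 2 := by
    have h₁ : G.dist u w ≤ 2 := G.dist_le p
    have h₂ := (Walk.reachable p).one_lt_dist_of_ne_of_not_adj huw hnadj
    omega
  have hgeo : IsGeodesicW G p := ⟨by simp [p, Walk.isPath_def, hzu.ne', hzw.ne, huw], hdist.symm⟩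
  have hcard : ({u, z, w} : Set V).ncard = 3 :=
    Set.ncard_eq_three.mpr ⟨u, z, w, hzu.ne', huw, hzw.ne, rfl⟩
  have hle := ncard_le_ncard_inter_support (S := S) p (T := {u, z, w}) (by
    rintro y (rfl | rfl | rfl) <;> simp_all [p])
  have hgp := hS p hgeo
  omega

lemma Fin.exists_ne_and_ne {r : ℕ} (hr : 3 ≤ r) (i j : Fin r) : ∃ k, k ≠ i ∧ k ≠ j := by
  obtain ⟨k, -, hk⟩ := Finset.exists_mem_notMem_of_card_lt_card
    (s := {i, j}) (t := Finset.univ)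
    (Finset.card_le_two.trans_lt (by rw [Finset.card_univ, Fintype.card_fin]; omega))
  simp only [Finset.mem_insert, Finset.mem_singleton, not_or] at hk
  exact ⟨k, hk⟩

namespace Pagoda

abbrev Vertex (r : ℕ) := Fin r ⊕ Fin r ⊕ Fin r ⊕ Unit

variable {r : ℕ}

abbrev a (i : Fin r) : Vertex r := .inl i
abbrev b (i : Fin r) : Vertex r := .inr (.inl i)
abbrev c (i : Fin r) : Vertex r := .inr (.inr (.inl i))
abbrev x : Vertex r := .inr (.inr (.inr ()))

@[simp] def Adj : Vertex r → Vertex r → Prop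
  | .inl i, .inr (.inl j) | .inr (.inl i), .inl j => i ≠ j
  | .inr (.inl i), .inr (.inr (.inl j)) | .inr (.inr (.inl i)), .inr (.inl j) => i ≠ j
  | .inr (.inr (.inl _)), .inr (.inr (.inr _)) | .inr (.inr (.inr _)), .inr (.inr (.inl _)) => True
  | _, _ => False

end Pagoda

open Pagoda in
def pagoda (r : ℕ) : SimpleGraph (Vertex r) where
  Adj := Adj
  symm := ⟨by rintro (i | i | i | ⟨⟩) (j | j | j | ⟨⟩) <;> simp [eq_comm]⟩
  loopless := ⟨by rintro (i | i | i | ⟨⟩) <;> simp⟩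

namespace Pagoda

variable {r : ℕ}

@[simp] lemma pagoda_adj {u v : Vertex r} : (pagoda r).Adj u v ↔ Adj u v := Iff.rfl

def layer : Vertex r → ℕ
  | .inl _ => 0
  | .inr (.inl _) => 1
  | .inr (.inr (.inl _)) => 2
  | .inr (.inr (.inr _)) => 3

section Triples

variable {i j k : Fin r}

lemma covered_aaa (hij : i ≠ j) (hik : i ≠ k) (hjk : j ≠ k) :
    CoveredByInducedPath (pagoda r) {a i, a j, a k} :=
  ⟨[a i, b k, a j, b i, a k], by simp_all [IsInducedPathList, eq_comm]⟩

lemma covered_aab (hr : 3 ≤ r) (hij : i ≠ j) (k : Fin r) :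
    CoveredByInducedPath (pagoda r) {a i, a j, b k} := by
  obtain ⟨m, hmi, hmj⟩ := Fin.exists_ne_and_ne hr i j
  rcases eq_or_ne k i with rfl | hki
  · exact ⟨[a k, b m, a j, b k], by simp_all [IsInducedPathList, eq_comm]⟩
  rcases eq_or_ne k j with rfl | hkj
  · exact ⟨[a k, b m, a i, b k], by simp_all [IsInducedPathList, eq_comm]⟩
  exact ⟨[a i, b k, a j], by simp_all [IsInducedPathList, eq_comm]⟩

lemma covered_aac (hij : i ≠ j) (k : Fin r) :
    CoveredByInducedPath (pagoda r) {a i, a j, c k} := by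
  rcases eq_or_ne k i with rfl | hki
  · exact ⟨[a j, b k, c j, x, c k, b j, a k], by simp_all [IsInducedPathList, eq_comm]⟩
  rcases eq_or_ne k j with rfl | hkj
  · exact ⟨[a i, b k, c i, x, c k, b i, a k], by simp_all [IsInducedPathList, eq_comm]⟩
  exact ⟨[a i, b j, c k, b i, a j], by simp_all [IsInducedPathList, eq_comm]⟩

lemma covered_aax (hr : 3 ≤ r) (hij : i ≠ j) :
    CoveredByInducedPath (pagoda r) {a i, a j, x} := by
  obtain ⟨m, hmi, hmj⟩ := Fin.exists_ne_and_ne hr i j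
  exact ⟨[a i, b m, a j, b i, c m, x], by simp_all [IsInducedPathList, eq_comm]⟩

lemma covered_abb (hr : 3 ≤ r) (i : Fin r) (hjk : j ≠ k) :
    CoveredByInducedPath (pagoda r) {a i, b j, b k} := by
  obtain ⟨m, hmj, hmk⟩ := Fin.exists_ne_and_ne hr j k
  rcases eq_or_ne i j with rfl | hij
  · exact ⟨[b i, a m, b k, a i], by simp_all [IsInducedPathList, eq_comm]⟩
  rcases eq_or_ne i k with rfl | hik
  · exact ⟨[b i, a m, b j, a i], by simp_all [IsInducedPathList, eq_comm]⟩
  exact ⟨[b j, a i, b k], by simp_all [IsInducedPathList, eq_comm]⟩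

lemma covered_abc (hr : 3 ≤ r) (i j k : Fin r) :
    CoveredByInducedPath (pagoda r) {a i, b j, c k} := by
  obtain ⟨m, hmi, hmk⟩ := Fin.exists_ne_and_ne hr i k
  rcases eq_or_ne j i with rfl | hji
  · rcases eq_or_ne k j with rfl | hkj
    · exact ⟨[b k, c m, x, c k, b m, a k], by simp_all [IsInducedPathList, eq_comm]⟩
    · exact ⟨[a j, b m, c k, b j], by simp_all [IsInducedPathList, eq_comm]⟩
  rcases eq_or_ne j k with rfl | hjk
  · exact ⟨[c j, b m, a i, b j], by simp_all [IsInducedPathList, eq_comm]⟩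
  exact ⟨[a i, b j, c k], by simp_all [IsInducedPathList, eq_comm]⟩

lemma covered_abx (hr : 3 ≤ r) (i j : Fin r) :
    CoveredByInducedPath (pagoda r) {a i, b j, x} := by
  obtain ⟨m, hmi, hmj⟩ := Fin.exists_ne_and_ne hr i j
  rcases eq_or_ne j i with rfl | hji
  · exact ⟨[b j, c m, x, c j, b m, a j], by simp_all [IsInducedPathList, eq_comm]⟩
  exact ⟨[a i, b j, c m, x], by simp_all [IsInducedPathList, eq_comm]⟩

lemma covered_acc (i : Fin r) (hjk : j ≠ k) :
    CoveredByInducedPath (pagoda r) {a i, c j, c k} := by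
  rcases eq_or_ne i j with rfl | hij
  · exact ⟨[c k, x, c i, b k, a i], by simp_all [IsInducedPathList, eq_comm]⟩
  exact ⟨[c j, x, c k, b j, a i], by simp_all [IsInducedPathList, eq_comm]⟩

lemma covered_acx (hr : 3 ≤ r) (i j : Fin r) :
    CoveredByInducedPath (pagoda r) {a i, c j, x} := by
  obtain ⟨m, hmi, hmj⟩ := Fin.exists_ne_and_ne hr i j
  exact ⟨[a i, b m, c j, x], by simp_all [IsInducedPathList, eq_comm]⟩

lemma covered_bbb (hij : i ≠ j) (hik : i ≠ k) (hjk : j ≠ k) :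
    CoveredByInducedPath (pagoda r) {b i, b j, b k} :=
  ⟨[b i, a j, b k, a i, b j], by simp_all [IsInducedPathList, eq_comm]⟩

lemma covered_bbc (hr : 3 ≤ r) (hij : i ≠ j) (k : Fin r) :
    CoveredByInducedPath (pagoda r) {b i, b j, c k} := by
  obtain ⟨m, hmi, hmj⟩ := Fin.exists_ne_and_ne hr i j
  rcases eq_or_ne k i with rfl | hki
  · exact ⟨[b k, a m, b j, c k], by simp_all [IsInducedPathList, eq_comm]⟩
  rcases eq_or_ne k j with rfl | hkj
  · exact ⟨[b k, a m, b i, c k], by simp_all [IsInducedPathList, eq_comm]⟩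
  exact ⟨[b i, c k, b j], by simp_all [IsInducedPathList, eq_comm]⟩

lemma covered_bbx (hij : i ≠ j) :
    CoveredByInducedPath (pagoda r) {b i, b j, x} :=
  ⟨[b j, c i, x, c j, b i], by simp_all [IsInducedPathList, eq_comm]⟩

lemma covered_bcc (i : Fin r) (hjk : j ≠ k) :
    CoveredByInducedPath (pagoda r) {b i, c j, c k} := by
  rcases eq_or_ne i j with rfl | hij
  · exact ⟨[c i, x, c k, b i], by simp_all [IsInducedPathList, eq_comm]⟩
  rcases eq_or_ne i k with rfl | hik
  · exact ⟨[c i, x, c j, b i], by simp_all [IsInducedPathList, eq_comm]⟩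
  exact ⟨[c j, b i, c k], by simp_all [IsInducedPathList, eq_comm]⟩

lemma covered_bcx (hr : 3 ≤ r) (i j : Fin r) :
    CoveredByInducedPath (pagoda r) {b i, c j, x} := by
  rcases eq_or_ne j i with rfl | hji
  · obtain ⟨m, hmj, -⟩ := Fin.exists_ne_and_ne hr j j
    exact ⟨[b j, c m, x, c j], by simp_all [IsInducedPathList, eq_comm]⟩
  exact ⟨[b i, c j, x], by simp_all [IsInducedPathList, eq_comm]⟩

lemma covered_ccc (hij : i ≠ j) (hik : i ≠ k) (hjk : j ≠ k) :
    CoveredByInducedPath (pagoda r) {c i, c j, c k} :=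
  ⟨[c i, b j, c k, b i, c j], by simp_all [IsInducedPathList, eq_comm]⟩

lemma covered_ccx (hij : i ≠ j) :
    CoveredByInducedPath (pagoda r) {c i, c j, x} :=
  ⟨[c i, x, c j], by simp_all [IsInducedPathList, eq_comm]⟩

end Triples

lemma covered_of_layer_le (hr : 3 ≤ r) :
    ∀ {u v w : Vertex r}, u ≠ v → u ≠ w → v ≠ w → layer u ≤ layer v → layer v ≤ layer w →
      CoveredByInducedPath (pagoda r) {u, v, w} := by
  rintro (i | i | i | ⟨⟩) (j | j | j | ⟨⟩) (k | k | k | ⟨⟩) huv huw hvw h₁ h₂ <;>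
    simp [layer] at huv huw hvw h₁ h₂
  exacts [covered_aaa huv huw hvw, covered_aab hr huv k, covered_aac huv k, covered_aax hr huv,
    covered_abb hr i hvw, covered_abc hr i j k, covered_abx hr i j, covered_acc i hvw,
    covered_acx hr i j, covered_bbb huv huw hvw, covered_bbc hr huv k, covered_bbx huv,
    covered_bcc i hvw, covered_bcx hr i j, covered_ccc huv huw hvw, covered_ccx huv]

lemma covered_triple (hr : 3 ≤ r) {u v w : Vertex r} (huv : u ≠ v) (huw : u ≠ w) (hvw : v ≠ w) :
    CoveredByInducedPath (pagoda r) {u, v, w} := by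
  wlog h₁ : layer u ≤ layer v generalizing u v w
  · rw [Set.insert_comm]
    exact this huv.symm hvw huw (by omega)
  wlog h₂ : layer v ≤ layer w generalizing u v w
  · rcases le_total (layer u) (layer w) with h | h
    · rw [Set.pair_comm]
      exact this huw huv hvw.symm h (by omega)
    · rw [Set.pair_comm, Set.insert_comm]
      exact this huw.symm hvw.symm huv h h₁
  exact covered_of_layer_le hr huv huw hvw h₁ h₂

lemma exists_walk_length_le_three (hr : 3 ≤ r) (u v : Vertex r) :
    ∃ p : (pagoda r).Walk u v, p.length ≤ 3 := by
  wlog h : layer u ≤ layer v generalizing u v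
  · obtain ⟨p, hp⟩ := this v u (by omega)
    exact ⟨p.reverse, by simpa using hp⟩
  have walk₁ : ∀ {u v : Vertex r}, (pagoda r).Adj u v →
      ∃ p : (pagoda r).Walk u v, p.length ≤ 3 :=
    fun h₁ => ⟨.cons h₁ .nil, by simp⟩
  have walk₂ : ∀ {u w v : Vertex r}, (pagoda r).Adj u w → (pagoda r).Adj w v →
      ∃ p : (pagoda r).Walk u v, p.length ≤ 3 :=
    fun h₁ h₂ => ⟨.cons h₁ (.cons h₂ .nil), by simp⟩
  have walk₃ : ∀ {u w w' v : Vertex r}, (pagoda r).Adj u w → (pagoda r).Adj w w' →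
      (pagoda r).Adj w' v → ∃ p : (pagoda r).Walk u v, p.length ≤ 3 :=
    fun h₁ h₂ h₃ => ⟨.cons h₁ (.cons h₂ (.cons h₃ .nil)), by simp⟩
  rcases u with i | i | i | ⟨⟩ <;> rcases v with j | j | j | ⟨⟩ <;> simp [layer] at h
  · obtain ⟨m, hmi, hmj⟩ := Fin.exists_ne_and_ne hr i j
    rcases eq_or_ne i j with rfl | hij
    · exact ⟨.nil, by simp⟩
    exact walk₂ (w := b m) (by simpa using hmi.symm) (by simpa using hmj)
  · obtain ⟨m, hmi, -⟩ := Fin.exists_ne_and_ne hr i i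
    obtain ⟨m', hm'i, hm'm⟩ := Fin.exists_ne_and_ne hr i m
    rcases eq_or_ne i j with rfl | hij
    · exact walk₃ (w := b m) (w' := a m') (by simpa using hmi.symm) (by simpa using hm'm.symm)
        (by simpa using hm'i)
    exact walk₁ (by simpa using hij)
  · obtain ⟨m, hmi, hmj⟩ := Fin.exists_ne_and_ne hr i j
    exact walk₂ (w := b m) (by simpa using hmi.symm) (by simpa using hmj)
  · obtain ⟨m, hmi, -⟩ := Fin.exists_ne_and_ne hr i i
    obtain ⟨m', -, hm'm⟩ := Fin.exists_ne_and_ne hr i m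
    exact walk₃ (w := b m) (w' := c m') (by simpa using hmi.symm) (by simpa using hm'm.symm)
      (by simp)
  · obtain ⟨m, hmi, hmj⟩ := Fin.exists_ne_and_ne hr i j
    rcases eq_or_ne i j with rfl | hij
    · exact ⟨.nil, by simp⟩
    exact walk₂ (w := a m) (by simpa using hmi.symm) (by simpa using hmj)
  · obtain ⟨m, hmi, -⟩ := Fin.exists_ne_and_ne hr i i
    rcases eq_or_ne i j with rfl | hij
    · exact walk₃ (w := c m) (w' := x) (by simpa using hmi.symm) (by simp) (by simp)
    exact walk₁ (by simpa using hij)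
  · obtain ⟨m, hmi, -⟩ := Fin.exists_ne_and_ne hr i i
    exact walk₂ (w := c m) (by simpa using hmi.symm) (by simp)
  · rcases eq_or_ne i j with rfl | hij
    · exact ⟨.nil, by simp⟩
    exact walk₂ (w := x) (by simp) (by simp)
  · exact walk₁ (by simp)
  · exact ⟨.nil, by simp⟩

lemma layer_add_one_eq_or_of_adj {u v : Vertex r} (h : (pagoda r).Adj u v) :
    layer u + 1 = layer v ∨ layer v + 1 = layer u := by
  rcases u with i | i | i | ⟨⟩ <;> rcases v with j | j | j | ⟨⟩ <;> simp_all [layer]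

lemma cliqueFree_three : (pagoda r).CliqueFree 3 := by
  let C : (pagoda r).Coloring (Fin 2) :=
    Coloring.mk (fun v => ⟨layer v % 2, Nat.mod_lt _ two_pos⟩) fun h => by
      rcases layer_add_one_eq_or_of_adj h with h | h <;> simp [Fin.ext_iff] <;> omega
  exact C.colorable.cliqueFree (by simp)

lemma card_vertex : Fintype.card (Vertex r) = 3 * r + 1 := by
  simp only [Fintype.card_sum, Fintype.card_fin, Fintype.card_unit]
  ring

lemma ncard_range_a : (Set.range (a (r := r))).ncard = r := by
  simp [Set.ncard_range_of_injective (f := a (r := r)) fun _ _ h => by simpa using h]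

lemma ncard_range_b : (Set.range (b (r := r))).ncard = r := by
  simp [Set.ncard_range_of_injective (f := b (r := r)) fun _ _ h => by simpa using h]

lemma ncard_range_c : (Set.range (c (r := r))).ncard = r := by
  simp [Set.ncard_range_of_injective (f := c (r := r)) fun _ _ h => by simpa using h]

lemma isIndepSet_range_a_union_range_c :
    (pagoda r).IsIndepSet (Set.range a ∪ Set.range c) := by
  rintro _ (⟨i, rfl⟩ | ⟨i, rfl⟩) _ (⟨j, rfl⟩ | ⟨j, rfl⟩) _ <;> simp

lemma ncard_range_a_union_range_c : (Set.range a ∪ Set.range (c (r := r))).ncard = 2 * r := by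
  rw [Set.ncard_union_eq (by simp [Set.disjoint_left]), ncard_range_a, ncard_range_c]
  ring

section Bound

variable {S : Set (Vertex r)}

lemma ncard_le_six (hS : ∀ z ∈ S, (S ∩ (pagoda r).neighborSet z).Subsingleton) {i j : Fin r}
    {v : Vertex r} (hbi : b i ∈ S) (hv : v ∈ S) (hvj : v = a j ∨ v = c j) : S.ncard ≤ 6 := by
  have hcover : S ⊆ {a i, c i, b j, x} ∪ (S ∩ (pagoda r).neighborSet (b i)) ∪
      (S ∩ (pagoda r).neighborSet v) := by
    intro u hu
    rcases hvj with rfl | rfl <;> rcases u with k | k | k | ⟨⟩ <;> simp_all [eq_comm] <;> tauto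
  calc S.ncard
      ≤ ({a i, c i, b j, x} : Set (Vertex r)).ncard + (S ∩ (pagoda r).neighborSet (b i)).ncard +
          (S ∩ (pagoda r).neighborSet v).ncard :=
        (Set.ncard_le_ncard hcover).trans
          ((Set.ncard_union_le _ _).trans (add_le_add_left (Set.ncard_union_le _ _) _))
    _ ≤ 4 + 1 + 1 := by
        gcongr
        · rw [← Finset.coe_pair, ← Finset.coe_insert, ← Finset.coe_insert, Set.ncard_coe_finset]
          exact Finset.card_le_four
        · exact Set.ncard_le_one_iff_subsingleton.mpr (hS _ hbi)
        · exact Set.ncard_le_one_iff_subsingleton.mpr (hS _ hv)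

lemma ncard_le_two_mul (hr : 3 ≤ r) (hS : ∀ z ∈ S, (S ∩ (pagoda r).neighborSet z).Subsingleton) :
    S.ncard ≤ 2 * r := by
  by_cases hB : ∃ i, b i ∈ S
  · obtain ⟨i, hbi⟩ := hB
    by_cases hAC : ∃ j, a j ∈ S ∨ c j ∈ S
    · obtain ⟨j, hj | hj⟩ := hAC
      · exact (ncard_le_six hS hbi hj (.inl rfl)).trans (by omega)
      · exact (ncard_le_six hS hbi hj (.inr rfl)).trans (by omega)
    push Not at hAC
    have hcover : S ⊆ Set.range b ∪ {x} := by
      rintro (k | k | k | ⟨⟩) hk <;> simp_all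
    calc S.ncard ≤ (Set.range (b (r := r))).ncard + ({x} : Set (Vertex r)).ncard :=
          (Set.ncard_le_ncard hcover).trans (Set.ncard_union_le _ _)
      _ ≤ 2 * r := by rw [ncard_range_b, Set.ncard_singleton]; omega
  push Not at hB
  by_cases hx : x ∈ S
  · have hcover : S ⊆ Set.range a ∪ (S ∩ (pagoda r).neighborSet x) ∪ {x} := by
      rintro (k | k | k | ⟨⟩) hk <;> simp_all
    calc S.ncard ≤ (Set.range (a (r := r))).ncard + (S ∩ (pagoda r).neighborSet x).ncard +
          ({x} : Set (Vertex r)).ncard :=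
          (Set.ncard_le_ncard hcover).trans
            ((Set.ncard_union_le _ _).trans (add_le_add_left (Set.ncard_union_le _ _) _))
      _ ≤ r + 1 + 1 := by
          gcongr
          · exact ncard_range_a.le
          · exact Set.ncard_le_one_iff_subsingleton.mpr (hS _ hx)
          · exact Set.ncard_singleton _ |>.le
      _ ≤ 2 * r := by omega
  · have hcover : S ⊆ Set.range a ∪ Set.range c := by
      rintro (k | k | k | ⟨⟩) hk <;> simp_all
    calc S.ncard ≤ (Set.range (a (r := r))).ncard + (Set.range (c (r := r))).ncard :=
          (Set.ncard_le_ncard hcover).trans (Set.ncard_union_le _ _)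
      _ = 2 * r := by rw [ncard_range_a, ncard_range_c]; ring

end Bound

lemma pagoda_connected (hr : 3 ≤ r) : (pagoda r).Connected :=
  (connected_iff _).mpr ⟨fun u v => (exists_walk_length_le_three hr u v).elim fun p _ => ⟨p⟩, ⟨x⟩⟩

lemma dist_le_three (hr : 3 ≤ r) (u v : Vertex r) : (pagoda r).dist u v ≤ 3 :=
  (exists_walk_length_le_three hr u v).elim fun p hp => (dist_le p).trans hp

lemma mpNum_pagoda (hr : 3 ≤ r) : mpNum (pagoda r) = 2 := by
  refine mpNum_eq_two ⟨x, b ⟨0, by omega⟩, by simp⟩ fun T hT => ?_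
  obtain ⟨u, v, w, huv, huw, hvw, rfl⟩ := Set.ncard_eq_three.mp hT
  exact covered_triple hr huv huw hvw

lemma gpNum_pagoda (hr : 3 ≤ r) : gpNum (pagoda r) = 2 * r := by
  refine IsGreatest.csSup_eq ⟨⟨_, ?_, ncard_range_a_union_range_c⟩, ?_⟩
  · exact IsGpSet.of_isIndepSet (dist_le_three hr) isIndepSet_range_a_union_range_c
  · rintro n ⟨S, hS, rfl⟩
    exact ncard_le_two_mul hr fun z hz => hS.subsingleton_inter_neighborSet cliqueFree_three hz

end Pagoda

theorem exists_graph_mp_two_gp_double (r : ℕ) (hr : 3 ≤ r) :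
    ∃ G : SimpleGraph (Fin (3 * r + 1)), G.Connected ∧ mpNum G = 2 ∧ gpNum G = 2 * r := by
  let f := (pagoda r).overFinIso Pagoda.card_vertex
  exact ⟨_, f.connected_iff.mp (Pagoda.pagoda_connected hr), f.mpNum_eq ▸ Pagoda.mpNum_pagoda hr,
    f.gpNum_eq ▸ Pagoda.gpNum_pagoda hr⟩
end

section
/- For all integers a, b with 3 ≤ b and 2b/3 ≤ a < b, there exists a graph G of order b+2 with mp(G) = a and gp(G) = b. -/
open SimpleGraph

/-!
Take `Mas(2c, s)` with `c = b - a` and `s = 2a - b`, so that `|R'| = |R''| = c` and the order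
is `2c + s + 2 = b + 2`. Whether two distinct vertices are adjacent only depends on their
classes `x, y, R', R'', S`, so every question about short induced paths becomes a finite check
on words over these five classes.

No induced path has five vertices, and no induced path meets `R'' ∪ S` three times, so this
set of `c + s = a` vertices is in monophonic position. Conversely any three classes lie on a
common induced path, so a set in monophonic position meets at most two classes and has at most
`c + s` vertices, the largest two classes being `S` and one half of `R` because `c ≤ s`, that
is `2b ≤ 3a`.

The diameter is two and `R ∪ S` spans no induced path on three vertices, so these
`2c + s = b` vertices are in general position. The geodesics `x s y`, `x r' r''` and `y r'' r'`
have no common vertex, so a set in general position misses at least two vertices.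
-/

namespace List

variable {α β : Type*}

def IsInducedChain (r : α → α → Prop) : List α → Prop
  | a :: b :: l => r a b ∧ (∀ c ∈ l, ¬ r a c) ∧ IsInducedChain r (b :: l)
  | _ => True

instance decidableIsInducedChain (r : α → α → Prop) [DecidableRel r] :
    ∀ l : List α, Decidable (l.IsInducedChain r)
  | [] => isTrue trivial
  | [_] => isTrue trivial
  | a :: b :: l =>
    haveI := decidableIsInducedChain r (b :: l)
    inferInstanceAs (Decidable (r a b ∧ _ ∧ _))

variable {r : α → α → Prop}

@[simp]
theorem isInducedChain_singleton (a : α) : [a].IsInducedChain r := trivial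

@[simp]
theorem isInducedChain_cons_cons {a b : α} {l : List α} :
    (a :: b :: l).IsInducedChain r ↔ r a b ∧ (∀ c ∈ l, ¬ r a c) ∧ (b :: l).IsInducedChain r :=
  Iff.rfl

theorem IsInducedChain.isChain : ∀ {l : List α}, l.IsInducedChain r → l.IsChain r
  | [], _ => .nil
  | [_], _ => .singleton _
  | _ :: _ :: _, h => .cons_cons h.1 h.2.2.isChain

theorem IsInducedChain.of_append_left :
    ∀ {l₁ l₂ : List α}, (l₁ ++ l₂).IsInducedChain r → l₁.IsInducedChain r
  | [], _, _ => trivial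
  | [_], _, _ => trivial
  | _ :: _ :: _, _, h =>
    ⟨h.1, fun c hc => h.2.1 c (mem_append_left _ hc), of_append_left h.2.2⟩

theorem isInducedChain_map_iff {s : β → β → Prop} {f : α → β} :
    ∀ {l : List α}, l.Nodup → (∀ a ∈ l, ∀ b ∈ l, a ≠ b → (s (f a) (f b) ↔ r a b)) →
      ((l.map f).IsInducedChain s ↔ l.IsInducedChain r)
  | [], _, _ => Iff.rfl
  | [_], _, _ => Iff.rfl
  | a :: b :: l, hl, h => by
    have ha : a ∉ b :: l := (nodup_cons.1 hl).1
    simp only [map_cons, isInducedChain_cons_cons, forall_mem_map]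
    refine and_congr (h a (by simp) b (by simp) (by grind)) (and_congr ?_ ?_)
    · exact forall₂_congr fun c hc => not_congr (h a (by simp) c (by simp [hc]) (by grind))
    · exact isInducedChain_map_iff (nodup_cons.1 hl).2 fun c hc d hd =>
        h c (by simp [hc]) d (by simp [hd])

end List

section Position

variable {V : Type*} {G : SimpleGraph V} {u v w : V}

theorem isInducedPathW_cons_iff {h : G.Adj u v} {q : G.Walk v w} :
    IsInducedPathW G (.cons h q) ↔
      IsInducedPathW G q ∧ u ∉ q.support ∧ ∀ z ∈ q.support.tail, ¬ G.Adj u z := by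
  have hsub : ∀ {a b}, q.toSubgraph.Adj a b → a ∈ q.support ∧ b ∈ q.support := fun hab =>
    ⟨by simpa using hab.fst_mem, by simpa using hab.snd_mem⟩
  have hsupp := q.cons_tail_support.symm
  simp only [IsInducedPathW, Walk.cons_isPath_iff, Walk.support_cons, List.mem_cons,
    Walk.toSubgraph, Subgraph.sup_adj, subgraphOfAdj_adj, Sym2.eq_iff]
  constructor
  · rintro ⟨⟨hq, hu⟩, hind⟩
    refine ⟨⟨hq, fun a b ha hb => ?_⟩, hu, fun z hz hadj => ?_⟩
    · rw [hind a b (.inr ha) (.inr hb)]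
      grind
    · have hzv : z ≠ v := by
        rintro rfl
        have := hq.support_nodup
        rw [hsupp] at this
        exact (List.nodup_cons.1 this).1 hz
      have hz' : z ∈ q.support := hsupp ▸ List.mem_cons_of_mem _ hz
      rcases (hind u z (.inl rfl) (.inr hz')).1 hadj with h' | h'
      · grind
      · exact hu (hsub h').1
  · rintro ⟨⟨hq, hind⟩, hu, hnadj⟩
    have hv : ∀ z ∈ q.support, G.Adj u z → z = v := fun z hz hadj => by
      rw [hsupp, List.mem_cons] at hz
      exact hz.resolve_right fun hz => hnadj z hz hadj
    refine ⟨⟨hq, hu⟩, fun a b ha hb => ⟨fun hab => ?_, ?_⟩⟩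
    · rcases ha with rfl | ha <;> rcases hb with rfl | hb
      · exact absurd hab G.irrefl
      · exact .inl (.inl ⟨rfl, (hv b hb hab).symm⟩)
      · exact .inl (.inr ⟨rfl, (hv a ha hab.symm).symm⟩)
      · exact .inr ((hind a b ha hb).1 hab)
    · rintro ((⟨rfl, rfl⟩ | ⟨rfl, rfl⟩) | hab)
      · exact h
      · exact h.symm
      · exact (hind a b (hsub hab).1 (hsub hab).2).2 hab

theorem isInducedPathW_iff_s8 {p : G.Walk u v} :
    IsInducedPathW G p ↔ p.support.Nodup ∧ p.support.IsInducedChain G.Adj := by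
  induction p with
  | nil => simp [IsInducedPathW]
  | cons h q ih =>
    rw [isInducedPathW_cons_iff, ih, Walk.support_cons, ← q.cons_tail_support]
    simp only [List.nodup_cons, List.mem_cons, List.tail_cons, List.isInducedChain_cons_cons,
      not_or]
    tauto

theorem IsGeodesicW.of_cons {h : G.Adj u v} {q : G.Walk v w} (hp : IsGeodesicW G (.cons h q)) :
    IsGeodesicW G q ∧ ∀ z ∈ q.support.tail, ¬ G.Adj u z := by
  obtain ⟨hpath, hlen⟩ := hp
  rw [Walk.length_cons] at hlen
  refine ⟨⟨hpath.of_cons, le_antisymm ?_ (dist_le q)⟩, fun z hz hadj => ?_⟩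
  · obtain ⟨r, hr⟩ := q.reachable.exists_walk_length_eq_dist
    have := dist_le (.cons h r)
    rw [Walk.length_cons] at this
    omega
  · classical
    cases q with
    | nil => simp at hz
    | cons h' q' =>
      rw [Walk.support_cons, List.tail_cons] at hz
      have := dist_le (.cons hadj (q'.dropUntil z hz))
      have := q'.length_dropUntil_le_length hz
      simp only [Walk.length_cons] at *
      omega

theorem IsGeodesicW.isInducedPathW {p : G.Walk u v} (hp : IsGeodesicW G p) :
    IsInducedPathW G p := by
  refine isInducedPathW_iff_s8.2 ⟨hp.1.support_nodup, ?_⟩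
  induction p with
  | nil => trivial
  | cons h q ih =>
    obtain ⟨hq, hnadj⟩ := hp.of_cons
    rw [Walk.support_cons, ← q.cons_tail_support, List.isInducedChain_cons_cons,
      q.cons_tail_support]
    exact ⟨h, hnadj, ih hq⟩

theorem IsMpSet.ncard_inter_le_two {T : Set V} (hT : IsMpSet G T) {l : List V} (hl : l.Nodup)
    (hc : l.IsInducedChain G.Adj) : (T ∩ {v | v ∈ l}).ncard ≤ 2 := by
  rcases eq_or_ne l [] with rfl | hne
  · simp
  · have := hT _ (isInducedPathW_iff_s8.2 (by rw [Walk.support_ofSupport]; exact ⟨hl, hc⟩) :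
      IsInducedPathW G (Walk.ofSupport l hne hc.isChain))
    rwa [Walk.support_ofSupport] at this

theorem IsGpSet.notMem_or_notMem_or_notMem {T : Set V} (hT : IsGpSet G T) (huv : G.Adj u v)
    (hvw : G.Adj v w) (huw : ¬ G.Adj u w) (hne : u ≠ w) : u ∉ T ∨ v ∉ T ∨ w ∉ T := by
  let p : G.Walk u w := .cons huv (.cons hvw .nil)
  have hgeo : IsGeodesicW G p := by
    refine ⟨by simp [p, Walk.cons_isPath_iff, huv.ne, hvw.ne, hne], le_antisymm ?_ (dist_le p)⟩
    have h0 : G.dist u w ≠ 0 := fun h => hne (p.reachable.dist_eq_zero_iff.1 h)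
    have h1 : G.dist u w ≠ 1 := fun h => huw (dist_eq_one_iff_adj.1 h)
    simp only [p, Walk.length_cons, Walk.length_nil]
    omega
  by_contra! h
  have hle := hT p hgeo
  have hlt : 2 < (T ∩ {x | x ∈ p.support}).ncard :=
    (Set.two_lt_ncard_iff ((List.finite_toSet _).inter_of_right _)).2
      ⟨u, v, w, by simp [p, h], by simp [p, h], by simp [p, h], huv.ne, hne, hvw.ne⟩
  omega

end Position

theorem ncard_setOf_inter_le_countP {V : Type*} (P : V → Prop) [DecidablePred P] (l : List V) :
    ({v | P v} ∩ {v | v ∈ l}).ncard ≤ l.countP P := by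
  classical
  calc _ = (l.filter P).toFinset.card := by
          rw [← Set.ncard_coe_finset]; congr 1; ext; simp [and_comm]
    _ ≤ (l.filter P).length := List.toFinset_card_le _
    _ = l.countP P := (List.countP_eq_length_filter ..).symm

theorem mpNum_eq {V : Type*} {G : SimpleGraph V} {S : Set V} {n : ℕ} (hS : IsMpSet G S)
    (hn : S.ncard = n) (h : ∀ T, IsMpSet G T → T.ncard ≤ n) : mpNum G = n :=
  IsGreatest.csSup_eq ⟨⟨S, hS, hn⟩, by rintro _ ⟨T, hT, rfl⟩; exact h T hT⟩

theorem gpNum_eq {V : Type*} {G : SimpleGraph V} {S : Set V} {n : ℕ} (hS : IsGpSet G S)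
    (hn : S.ncard = n) (h : ∀ T, IsGpSet G T → T.ncard ≤ n) : gpNum G = n :=
  IsGreatest.csSup_eq ⟨⟨S, hS, hn⟩, by rintro _ ⟨T, hT, rfl⟩; exact h T hT⟩

open Finset

theorem Function.Surjective.exists_section_mem {α β : Type*} {f : α → β}
    (hf : Function.Surjective f) (T : Set α) :
    ∃ g : β → α, (∀ b, f (g b) = b) ∧ ∀ t ∈ T, g (f t) ∈ T := by
  have : ∀ b, ∃ a, f a = b ∧ ((∃ t ∈ T, f t = b) → a ∈ T) := fun b => by
    by_cases h : ∃ t ∈ T, f t = b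
    · obtain ⟨t, ht, rfl⟩ := h
      exact ⟨t, rfl, fun _ => ht⟩
    · obtain ⟨a, rfl⟩ := hf b
      exact ⟨a, rfl, fun h' => absurd h' h⟩
  choose g hg hgT using this
  exact ⟨g, hg, fun t ht => hgT _ ⟨t, ht, rfl⟩⟩

theorem exists_fin_card_fiber_eq {α : Type*} [Fintype α] [DecidableEq α] (n : α → ℕ) {N : ℕ}
    (hN : ∑ a, n a = N) : ∃ f : Fin N → α, ∀ a, #{i | f i = a} = n a := by
  let e : (Σ a, Fin (n a)) ≃ Fin N := Fintype.equivFinOfCardEq (by simp [hN])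
  refine ⟨fun i => (e.symm i).1, fun a => ?_⟩
  rw [← Fintype.card_subtype, ← Fintype.card_fin (n a)]
  exact Fintype.card_congr ((e.symm.subtypeEquiv fun _ => Iff.rfl).trans (Equiv.sigmaSubtype a))

inductive MasPart
  | x | y | R' | R'' | S
  deriving DecidableEq

namespace MasPart

instance : Fintype MasPart :=
  ⟨{x, y, R', R'', S}, fun p => by cases p <;> simp⟩

def adj : MasPart → MasPart → Bool
  | R', R' | R', R'' | R'', R' | R'', R'' => true
  | x, R' | R', x | x, S | S, x => true
  | y, R'' | R'', y | y, S | S, y => true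
  | _, _ => false

theorem adj_comm (p q : MasPart) : p.adj q = q.adj p := by
  cases p <;> cases q <;> rfl

theorem adj_or_exists_adj_adj (p q : MasPart) :
    p.adj q ∨ ∃ r, r ≠ p ∧ r ≠ q ∧ p.adj r ∧ r.adj q := by
  revert p q
  decide

theorem length_le_four_of_isInducedChain {w : List MasPart}
    (hw : w.IsInducedChain (adj · ·)) : w.length ≤ 4 := by
  match w, hw with
  | [], _ | [_], _ | [_, _], _ | [_, _, _], _ | [_, _, _, _], _ => simp
  | a :: b :: c :: d :: e :: l, hw =>
    have key : ∀ a b c d e : MasPart, ¬ [a, b, c, d, e].IsInducedChain (adj · ·) := by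
      decide
    exact absurd (List.IsInducedChain.of_append_left (l₂ := l) hw) (key a b c d e)

theorem countP_mem_R''_S_le_two {w : List MasPart} (hw : w.IsInducedChain (adj · ·)) :
    w.countP (· ∈ ({R'', S} : Finset MasPart)) ≤ 2 := by
  have hlen := length_le_four_of_isInducedChain hw
  match w, hw, hlen with
  | [], _, _ | [_], _, _ | [_, _], _, _ => exact (List.countP_le_length).trans (by simp)
  | [a, b, c], hw, _ =>
    have key : ∀ a b c : MasPart, [a, b, c].IsInducedChain (adj · ·) →
        [a, b, c].countP (· ∈ ({R'', S} : Finset MasPart)) ≤ 2 := by decide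
    exact key a b c hw
  | [a, b, c, d], hw, _ =>
    have key : ∀ a b c d : MasPart, [a, b, c, d].IsInducedChain (adj · ·) →
        [a, b, c, d].countP (· ∈ ({R'', S} : Finset MasPart)) ≤ 2 := by decide
    exact key a b c d hw
  | _ :: _ :: _ :: _ :: _ :: _, _, hlen => simp only [List.length_cons] at hlen; omega

theorem countP_mem_R'_R''_S_le_two {w : List MasPart} (hw : w.IsInducedChain (adj · ·))
    (hlen : w.length ≤ 3) : w.countP (· ∈ ({R', R'', S} : Finset MasPart)) ≤ 2 := by
  match w, hw, hlen with
  | [], _, _ | [_], _, _ | [_, _], _, _ => exact (List.countP_le_length).trans (by simp)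
  | [a, b, c], hw, _ =>
    have key : ∀ a b c : MasPart, [a, b, c].IsInducedChain (adj · ·) →
        [a, b, c].countP (· ∈ ({R', R'', S} : Finset MasPart)) ≤ 2 := by decide
    exact key a b c hw
  | _ :: _ :: _ :: _ :: _, _, hlen => simp only [List.length_cons] at hlen; omega

theorem exists_isInducedChain_mem {p q r : MasPart} (hpq : p ≠ q) (hpr : p ≠ r)
    (hqr : q ≠ r) :
    ∃ w : List MasPart, w.Nodup ∧ w.IsInducedChain (adj · ·) ∧ p ∈ w ∧ q ∈ w ∧ r ∈ w := by
  have hcover : ∀ p q r : MasPart, p ≠ q → p ≠ r → q ≠ r →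
      ∃ w ∈ [[S, x, R', R''], [S, y, R'', R'], [x, R', R'', y], [x, S, y]],
        p ∈ w ∧ q ∈ w ∧ r ∈ w := by decide
  have hind : ∀ w ∈ [[S, x, R', R''], [S, y, R'', R'], [x, R', R'', y], [x, S, y]],
      w.Nodup ∧ w.IsInducedChain (adj · ·) := by decide
  obtain ⟨w, hw, hmem⟩ := hcover p q r hpq hpr hqr
  exact ⟨w, (hind w hw).1, (hind w hw).2, hmem⟩

def size (c s : ℕ) : MasPart → ℕ
  | x | y => 1
  | R' | R'' => c
  | S => s

theorem sum_size (c s : ℕ) : ∑ p : MasPart, p.size c s = 2 * c + s + 2 := by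
  change ∑ p ∈ {x, y, R', R'', S}, p.size c s = _
  simp [size]
  ring

end MasPart

open MasPart

/-- `Mas(2c, s)` when the fibres of `f` have the sizes `MasPart.size c s`; the classes `R'` and
`R''` are adjacent to themselves, so each spans a clique. -/
def masGraph {V : Type*} (f : V → MasPart) : SimpleGraph V where
  Adj u v := u ≠ v ∧ (f u).adj (f v)
  symm := ⟨fun _ _ h => ⟨h.1.symm, adj_comm (f _) (f _) ▸ h.2⟩⟩
  loopless := ⟨fun _ h => h.1 rfl⟩

section MasGraph

variable {V : Type*} {f : V → MasPart}

@[simp]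
theorem masGraph_adj {u v : V} : (masGraph f).Adj u v ↔ u ≠ v ∧ (f u).adj (f v) := Iff.rfl

theorem isInducedChain_map_iff_masGraph {l : List V} (hl : l.Nodup) :
    (l.map f).IsInducedChain (adj · ·) ↔ l.IsInducedChain (masGraph f).Adj :=
  List.isInducedChain_map_iff hl fun _ _ _ _ hab => by simp [hab]

theorem isInducedChain_map_section_iff {g : MasPart → V} (hg : ∀ p, f (g p) = p)
    {w : List MasPart} (hw : w.Nodup) :
    (w.map g).IsInducedChain (masGraph f).Adj ↔ w.IsInducedChain (adj · ·) :=
  List.isInducedChain_map_iff hw fun p _ q _ hpq => by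
    simp [hg, (Function.LeftInverse.injective hg).ne hpq]

theorem masGraph_dist_le_two (hf : Function.Surjective f) (u v : V) :
    (masGraph f).dist u v ≤ 2 := by
  rcases eq_or_ne u v with rfl | huv
  · simp
  rcases adj_or_exists_adj_adj (f u) (f v) with h | ⟨r, hru, hrv, hur, hrv'⟩
  · have huv' : (masGraph f).Adj u v := ⟨huv, h⟩
    exact (dist_le huv'.toWalk).trans (by simp)
  · obtain ⟨w, rfl⟩ := hf r
    have huw : (masGraph f).Adj u w := ⟨fun h => hru (congrArg f h).symm, hur⟩
    have hwv : (masGraph f).Adj w v := ⟨fun h => hrv (congrArg f h), hrv'⟩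
    exact (dist_le (.cons huw (.cons hwv .nil))).trans (by simp)

theorem isMpSet_masGraph : IsMpSet (masGraph f) {v | f v ∈ ({R'', S} : Finset MasPart)} := by
  intro u v p hp
  rw [isInducedPathW_iff_s8] at hp
  calc _ ≤ p.support.countP (fun v => f v ∈ ({R'', S} : Finset MasPart)) :=
        ncard_setOf_inter_le_countP _ _
    _ = (p.support.map f).countP (· ∈ ({R'', S} : Finset MasPart)) := by
        rw [List.countP_map]; rfl
    _ ≤ 2 := countP_mem_R''_S_le_two ((isInducedChain_map_iff_masGraph hp.1).2 hp.2)

theorem isGpSet_masGraph (hf : Function.Surjective f) :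
    IsGpSet (masGraph f) {v | f v ∈ ({R', R'', S} : Finset MasPart)} := by
  intro u v p hp
  have hlen : p.length ≤ 2 := hp.2 ▸ masGraph_dist_le_two hf u v
  obtain ⟨hl, hc⟩ := isInducedPathW_iff_s8.1 hp.isInducedPathW
  calc _ ≤ p.support.countP (fun v => f v ∈ ({R', R'', S} : Finset MasPart)) :=
        ncard_setOf_inter_le_countP _ _
    _ = (p.support.map f).countP (· ∈ ({R', R'', S} : Finset MasPart)) := by
        rw [List.countP_map]; rfl
    _ ≤ 2 := countP_mem_R'_R''_S_le_two ((isInducedChain_map_iff_masGraph hl).2 hc)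
        (by simp only [List.length_map, Walk.length_support]; omega)

theorem IsMpSet.exists_forall_eq_or_eq (hf : Function.Surjective f) {T : Set V}
    (hT : IsMpSet (masGraph f) T) : ∃ p q, ∀ t ∈ T, f t = p ∨ f t = q := by
  obtain ⟨g, hg, hgT⟩ := hf.exists_section_mem T
  have hg_inj : g.Injective := Function.LeftInverse.injective hg
  by_contra! h
  obtain ⟨t₁, ht₁, -⟩ := h x x
  obtain ⟨t₂, ht₂, h₂₁, -⟩ := h (f t₁) (f t₁)
  obtain ⟨t₃, ht₃, h₃₁, h₃₂⟩ := h (f t₁) (f t₂)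
  obtain ⟨w, hw, hwc, h₁, h₂, h₃⟩ := exists_isInducedChain_mem h₂₁.symm h₃₁.symm h₃₂.symm
  have hle :=
    hT.ncard_inter_le_two (hw.map hg_inj) ((isInducedChain_map_section_iff hg hw).2 hwc)
  have hlt : 2 < (T ∩ {v | v ∈ w.map g}).ncard :=
    (Set.two_lt_ncard_iff ((List.finite_toSet _).inter_of_right _)).2
      ⟨g (f t₁), g (f t₂), g (f t₃), ⟨hgT _ ht₁, List.mem_map_of_mem h₁⟩,
        ⟨hgT _ ht₂, List.mem_map_of_mem h₂⟩, ⟨hgT _ ht₃, List.mem_map_of_mem h₃⟩,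
        hg_inj.ne h₂₁.symm, hg_inj.ne h₃₁.symm, hg_inj.ne h₃₂.symm⟩
  omega

theorem IsGpSet.exists_ne_notMem (hf : Function.Surjective f) {T : Set V}
    (hT : IsGpSet (masGraph f) T) : ∃ u v, u ≠ v ∧ u ∉ T ∧ v ∉ T := by
  obtain ⟨g, hg⟩ : ∃ g : MasPart → V, ∀ p, f (g p) = p := ⟨_, Function.rightInverse_surjInv hf⟩
  have hg_inj : g.Injective := Function.LeftInverse.injective hg
  have hpath : ∀ p q r : MasPart, p ≠ q ∧ q ≠ r ∧ p ≠ r ∧ p.adj q ∧ q.adj r ∧ ¬ p.adj r →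
      g p ∉ T ∨ g q ∉ T ∨ g r ∉ T := fun p q r ⟨hpq, hqr, hpr, h₁, h₂, h₃⟩ =>
    hT.notMem_or_notMem_or_notMem (by simp [hg, hg_inj.ne hpq, h₁])
      (by simp [hg, hg_inj.ne hqr, h₂]) (by simp [hg, h₃]) (hg_inj.ne hpr)
  have hpair : ∀ {p q : MasPart}, p ≠ q → g p ∉ T → g q ∉ T → ∃ u v, u ≠ v ∧ u ∉ T ∧ v ∉ T :=
    fun hpq hp hq => ⟨_, _, hg_inj.ne hpq, hp, hq⟩
  have h₁ := hpath x S y (by decide)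
  have h₂ := hpath x R' R'' (by decide)
  have h₃ := hpath y R'' R' (by decide)
  rcases h₁ with h₁ | h₁ | h₁ <;> rcases h₂ with h₂ | h₂ | h₂ <;> rcases h₃ with h₃ | h₃ | h₃ <;>
    first
      | exact hpair (by decide) h₁ h₂
      | exact hpair (by decide) h₁ h₃

end MasGraph

section Count

variable {V : Type*} [Fintype V] {f : V → MasPart} {c s : ℕ}

theorem ncard_setOf_mem_eq_sum_size (hf : ∀ p, #{v | f v = p} = p.size c s)
    (Q : Finset MasPart) : {v | f v ∈ Q}.ncard = ∑ p ∈ Q, p.size c s := by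
  rw [Set.ncard_eq_toFinset_card', Set.toFinset_ofPred,
    card_eq_sum_card_fiberwise (f := f) (t := Q) (by simp [Set.MapsTo])]
  refine sum_congr rfl fun p hp => ?_
  rw [← hf p, filter_filter]
  congr 1
  ext v
  simp only [mem_filter, mem_univ, true_and]
  exact ⟨And.right, fun h => ⟨h ▸ hp, h⟩⟩

theorem surjective_of_card_fiber (hf : ∀ p, #{v | f v = p} = p.size c s) (hc : 1 ≤ c)
    (hs : 1 ≤ s) : Function.Surjective f := fun p => by
  have : 0 < #{v | f v = p} := by rw [hf]; cases p <;> simp [size] <;> omega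
  obtain ⟨v, hv⟩ := card_pos.1 this
  exact ⟨v, (mem_filter.1 hv).2⟩

theorem mpNum_masGraph (hf : ∀ p, #{v | f v = p} = p.size c s) (hc : 1 ≤ c) (hcs : c ≤ s) :
    mpNum (masGraph f) = c + s := by
  refine mpNum_eq isMpSet_masGraph (by rw [ncard_setOf_mem_eq_sum_size hf]; simp [size])
    fun T hT => ?_
  obtain ⟨p, q, hpq⟩ :=
    hT.exists_forall_eq_or_eq (surjective_of_card_fiber hf hc (hc.trans hcs))
  calc T.ncard ≤ {v | f v ∈ ({p, q} : Finset MasPart)}.ncard :=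
        Set.ncard_le_ncard (fun t ht => by simpa using hpq t ht)
    _ = ∑ r ∈ {p, q}, r.size c s := ncard_setOf_mem_eq_sum_size hf _
    _ ≤ c + s := by cases p <;> cases q <;> simp [size] <;> omega

theorem gpNum_masGraph (hf : ∀ p, #{v | f v = p} = p.size c s) (hc : 1 ≤ c) (hs : 1 ≤ s) :
    gpNum (masGraph f) = 2 * c + s := by
  have hsurj := surjective_of_card_fiber hf hc hs
  refine gpNum_eq (isGpSet_masGraph hsurj)
    (by rw [ncard_setOf_mem_eq_sum_size hf]; simp [size]; ring) fun T hT => ?_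
  obtain ⟨u, v, huv, hu, hv⟩ := hT.exists_ne_notMem hsurj
  have hcard : Nat.card V = 2 * c + s + 2 := by
    rw [← Set.ncard_univ, ← sum_size c s, ← ncard_setOf_mem_eq_sum_size hf]
    simp
  have hcompl := Set.ncard_add_ncard_compl {u, v}
  have hsub : T.ncard ≤ ({u, v} : Set V)ᶜ.ncard :=
    Set.ncard_le_ncard fun t ht => by rintro (rfl | rfl) <;> contradiction
  rw [Set.ncard_pair huv] at hcompl
  omega

end Count

theorem exists_graph_order_b_add_two_general (a b : ℕ) (h23 : 2 * b ≤ 3 * a)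
    (hab : a < b) :
    ∃ G : SimpleGraph (Fin (b + 2)), mpNum G = a ∧ gpNum G = b := by
  obtain ⟨f, hf⟩ := exists_fin_card_fiber_eq (N := b + 2) (MasPart.size (b - a) (2 * a - b))
    (by rw [MasPart.sum_size]; omega)
  refine ⟨masGraph f, ?_, ?_⟩
  · rw [mpNum_masGraph hf (by omega) (by omega)]
    omega
  · rw [gpNum_masGraph hf (by omega) (by omega)]
    omega

theorem exists_graph_order_b_add_two (a b : ℕ) (hb : 3 ≤ b) (h23 : 2 * b ≤ 3 * a)
    (hab : a < b) :
    ∃ G : SimpleGraph (Fin (b + 2)), mpNum G = a ∧ gpNum G = b :=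
  exists_graph_order_b_add_two_general a b h23 hab
end

section
/- For a ≥ 2 and a ≤ n ≤ a², the maximum number of edges of a graph of order n with monophonic position number a equals the number of edges of the Turán graph T_{n,a}, and for n ≥ a²+1 it is strictly less than the number of edges of T_{n,a}. -/
open SimpleGraph

/-- `mex n a`: the largest number of edges of a graph of order `n` with
monophonic position number `a`. -/
noncomputable def mexNum (n a : ℕ) : ℕ :=
  sSup {m | ∃ G : SimpleGraph (Fin n), mpNum G = a ∧ G.edgeSet.ncard = m}

/-! Cliques are in monophonic position, so a graph with mp-number `a` is `K_{a+1}`-free and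
Turán's theorem bounds its size by that of `T_{n,a}`. In a complete multipartite graph every
induced path has at most three vertices, so a vertex set is in monophonic position exactly when no
two of its vertices share a part while a third lies elsewhere: it lies inside one part or meets
every part at most once. Hence `mp(T_{n,a}) = a` for `a ≤ n ≤ a²`, where parts have at most `a`
vertices, and the bound is attained. For `n > a²` a graph attaining it would be Turán-maximal,
hence complete multipartite with at most `a` parts, one of which then has more than `a` vertices
and is an mp-set. -/

open Finset

lemma Set.ncard_le_of_injOn_lt {β : Type*} {S : Set β} {r : ℕ} (g : β → ℕ)
    (hg : ∀ x ∈ S, g x < r) (hinj : Set.InjOn g S) : S.ncard ≤ r := by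
  simpa using Set.ncard_le_ncard_of_injOn g (t := ↑(Finset.range r)) (by simpa using hg) hinj
    (finite_toSet _)

section MonophonicPosition

variable {V : Type*} {G : SimpleGraph V}

lemma SimpleGraph.Walk.IsPath.eq_add_one_or_of_toSubgraph_adj {u v : V} {p : G.Walk u v}
    (hp : p.IsPath) {i j : ℕ} (hi : i ≤ p.length) (hj : j ≤ p.length)
    (h : p.toSubgraph.Adj (p.getVert i) (p.getVert j)) : j = i + 1 ∨ i = j + 1 := by
  obtain ⟨k, hk, hkl⟩ := p.toSubgraph_adj_iff.1 h
  rcases Sym2.eq_iff.1 hk with ⟨h1, h2⟩ | ⟨h1, h2⟩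
  · have := hp.getVert_injOn (show k ≤ p.length by omega) hi h1
    have := hp.getVert_injOn (show k + 1 ≤ p.length by omega) hj h2
    omega
  · have := hp.getVert_injOn (show k ≤ p.length by omega) hj h1
    have := hp.getVert_injOn (show k + 1 ≤ p.length by omega) hi h2
    omega

lemma IsInducedPathW.not_adj_getVert {u v : V} {p : G.Walk u v} (hp : IsInducedPathW G p)
    {i j : ℕ} (hi : i ≤ p.length) (hj : j ≤ p.length) (hij : j ≠ i + 1) (hji : i ≠ j + 1) :
    ¬G.Adj (p.getVert i) (p.getVert j) := fun hadj => by
  have := hp.1.eq_add_one_or_of_toSubgraph_adj hi hj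
    ((hp.2 _ _ (p.getVert_mem_support i) (p.getVert_mem_support j)).1 hadj)
  omega

lemma isInducedPathW_cons_cons_nil {x y z : V} (hxy : G.Adj x y) (hyz : G.Adj y z)
    (hxz : x ≠ z) (hnxz : ¬G.Adj x z) : IsInducedPathW G (.cons hxy (.cons hyz .nil)) := by
  refine ⟨by simp [hxy.ne, hyz.ne, hxz], fun a b ha hb => ⟨fun hab => ?_, fun hab => hab.adj_sub⟩⟩
  simp only [Walk.support_cons, Walk.support_nil, List.mem_cons, List.not_mem_nil, or_false]
    at ha hb
  rcases ha with rfl | rfl | rfl <;> rcases hb with rfl | rfl | rfl <;>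
    simp_all [Walk.toSubgraph, G.adj_comm]

lemma isMpSet_of_forall_getVert {S : Set V}
    (h : ∀ ⦃u v : V⦄ (p : G.Walk u v), IsInducedPathW G p → ∀ ⦃i j k : ℕ⦄, i < j → j < k →
      k ≤ p.length → p.getVert i ∈ S → p.getVert j ∈ S → p.getVert k ∈ S → False) :
    IsMpSet G S := by
  intro u v p hp
  by_contra! h3
  obtain ⟨x, y, z, ⟨hxS, hx⟩, ⟨hyS, hy⟩, ⟨hzS, hz⟩, hxy, hxz, hyz⟩ :=
    (Set.two_lt_ncard_iff (p.support.finite_toSet.subset Set.inter_subset_right)).1 h3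
  obtain ⟨i, rfl, hi⟩ := Walk.mem_support_iff_exists_getVert.1 hx
  obtain ⟨j, rfl, hj⟩ := Walk.mem_support_iff_exists_getVert.1 hy
  obtain ⟨k, rfl, hk⟩ := Walk.mem_support_iff_exists_getVert.1 hz
  have h := h p hp
  rcases Nat.lt_or_gt_of_ne (ne_of_apply_ne _ hxy) with hij | hij <;>
  rcases Nat.lt_or_gt_of_ne (ne_of_apply_ne _ hxz) with hik | hik <;>
  rcases Nat.lt_or_gt_of_ne (ne_of_apply_ne _ hyz) with hjk | hjk <;>
  first | omega | solve_by_elim (maxDepth := 8)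

lemma isMpSet_of_isClique {S : Set V} (hS : G.IsClique S) : IsMpSet G S :=
  isMpSet_of_forall_getVert fun _ _ p hp i _ k hij hjk hk hi _ hk' =>
    hp.not_adj_getVert (by omega) hk (by omega) (by omega) <| hS hi hk' fun h => by
      have := hp.1.getVert_injOn (show i ≤ p.length by omega) hk h
      omega

lemma IsMpSet.ncard_le_mpNum [Finite V] {S : Set V} (hS : IsMpSet G S) : S.ncard ≤ mpNum G :=
  le_csSup ⟨Nat.card V, by rintro _ ⟨T, -, rfl⟩; exact Set.ncard_le_card T⟩ ⟨S, hS, rfl⟩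

lemma mpNum_le {r : ℕ} (h : ∀ S : Set V, IsMpSet G S → S.ncard ≤ r) : mpNum G ≤ r :=
  csSup_le' (by rintro _ ⟨S, hS, rfl⟩; exact h S hS)

lemma SimpleGraph.IsNClique.le_mpNum [Finite V] {k : ℕ} {s : Finset V} (hs : G.IsNClique k s) :
    k ≤ mpNum G := by
  simpa [hs.card_eq] using (isMpSet_of_isClique hs.isClique).ncard_le_mpNum

lemma cliqueFree_mpNum_add_one [Finite V] : G.CliqueFree (mpNum G + 1) :=
  fun _ hs => by have := hs.le_mpNum; omega

end MonophonicPosition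

section Multipartite

variable {V α : Type*} {G : SimpleGraph V} {f : V → α}

lemma IsInducedPathW.length_le_two_of_adj_iff_ne (hG : ∀ v w, G.Adj v w ↔ f v ≠ f w)
    {u v : V} {p : G.Walk u v} (hp : IsInducedPathW G p) : p.length ≤ 2 := by
  by_contra! hl
  have same : ∀ i j, i + 2 ≤ j → j ≤ p.length → f (p.getVert i) = f (p.getVert j) :=
    fun i j hij hj => not_not.1 fun hne =>
      hp.not_adj_getVert (by omega) hj (by omega) (by omega) ((hG _ _).2 hne)
  exact (hG _ _).1 (p.adj_getVert_succ (by omega : 0 < p.length))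
    ((same 0 3 (by omega) hl).trans (same 1 3 (by omega) hl).symm)

theorem isMpSet_iff_of_adj_iff_ne (hG : ∀ v w, G.Adj v w ↔ f v ≠ f w) {S : Set V} :
    IsMpSet G S ↔ ∀ x ∈ S, ∀ y ∈ S, ∀ z ∈ S, x ≠ z → f x = f z → f y = f x := by
  constructor
  · intro hS x hx y hy z hz hxz hfxz
    by_contra hfyx
    have hxy : G.Adj x y := (hG x y).2 (Ne.symm hfyx)
    have hyz : G.Adj y z := (hG y z).2 (hfxz ▸ hfyx)
    have hp := isInducedPathW_cons_cons_nil hxy hyz hxz (by simpa [hG] using hfxz)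
    have h3 : ({x, y, z} : Set V).ncard = 3 :=
      Set.ncard_eq_three.2 ⟨x, y, z, hxy.ne, hxz, hyz.ne, rfl⟩
    have := Set.ncard_le_ncard (s := {x, y, z})
      (t := S ∩ {w | w ∈ (Walk.cons hxy (.cons hyz .nil)).support})
      (by rintro w (rfl | rfl | rfl) <;> simp [*])
      ((List.finite_toSet _).subset Set.inter_subset_right)
    have := hS _ hp
    omega
  · intro hS
    refine isMpSet_of_forall_getVert fun _ _ p hp i j k hij hjk hk hi hj hk' => ?_
    have hl := hp.length_le_two_of_adj_iff_ne hG
    obtain ⟨rfl, rfl, rfl⟩ : i = 0 ∧ j = 1 ∧ k = 2 := by omega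
    have h02 : f (p.getVert 0) = f (p.getVert 2) :=
      not_not.1 fun hne => hp.not_adj_getVert (by omega) hk (by omega) (by omega) ((hG _ _).2 hne)
    have hne : p.getVert 0 ≠ p.getVert 2 := fun h => by
      have := hp.1.getVert_injOn (show 0 ≤ p.length by omega) hk h
      omega
    exact (hG _ _).1 (p.adj_getVert_succ (by omega : 0 < p.length))
      (hS _ hi _ hj _ hk' hne h02).symm

lemma IsMpSet.injOn_or_exists_forall_eq (hG : ∀ v w, G.Adj v w ↔ f v ≠ f w) {S : Set V}
    (hS : IsMpSet G S) : Set.InjOn f S ∨ ∃ c, ∀ x ∈ S, f x = c := by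
  refine or_iff_not_imp_left.2 fun hinj => ?_
  obtain ⟨x, hx, z, hz, hfxz, hxz⟩ : ∃ x ∈ S, ∃ z ∈ S, f x = f z ∧ x ≠ z := by
    simpa [Set.InjOn] using hinj
  exact ⟨f x, fun y hy => (isMpSet_iff_of_adj_iff_ne hG).1 hS x hx y hy z hz hxz hfxz⟩

lemma ncard_preimage_singleton_le_mpNum [Finite V] (hG : ∀ v w, G.Adj v w ↔ f v ≠ f w) (c : α) :
    (f ⁻¹' {c}).ncard ≤ mpNum G :=
  ((isMpSet_iff_of_adj_iff_ne hG).2 fun _ hx _ hy _ _ _ _ => hy.trans hx.symm).ncard_le_mpNum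

end Multipartite

lemma mpNum_turanGraph_le {n r : ℕ} (hn : n ≤ r ^ 2) : mpNum (turanGraph n r) ≤ r := by
  have hlt : ∀ v : Fin n, (v : ℕ) < r * r := fun v => v.isLt.trans_le (by rwa [← sq])
  refine mpNum_le fun S hS => ?_
  rcases hS.injOn_or_exists_forall_eq (f := fun v : Fin n => (v : ℕ) % r) fun _ _ => .rfl with
    hinj | ⟨c, hc⟩
  · exact Set.ncard_le_of_injOn_lt _
      (fun v _ => Nat.mod_lt _ (Nat.pos_of_mul_pos_left ((Nat.zero_le _).trans_lt (hlt v)))) hinj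
  · refine Set.ncard_le_of_injOn_lt (fun v : Fin n => (v : ℕ) / r)
      (fun v _ => Nat.div_lt_of_lt_mul (hlt v)) fun v hv w hw hvw => Fin.ext ?_
    rw [← Nat.div_add_mod v r, ← Nat.div_add_mod w r, hc v hv, hc w hw]
    exact congrArg (r * · + c) hvw

lemma mpNum_turanGraph {n r : ℕ} (hr : 0 < r) (hrn : r ≤ n) (hn : n ≤ r ^ 2) :
    mpNum (turanGraph n r) = r := by
  refine (mpNum_turanGraph_le hn).antisymm ?_
  obtain ⟨s, hs⟩ := not_forall_not.1 <|
    not_cliqueFree_of_isTuranMaximal (by simpa using hrn) (isTuranMaximal_turanGraph hr)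
  exact hs.le_mpNum

lemma turanGraph_edgeSet_nonempty {n r : ℕ} (hr : 2 ≤ r) (hn : 2 ≤ n) :
    (turanGraph n r).edgeSet.Nonempty :=
  ⟨s(⟨0, by omega⟩, ⟨1, by omega⟩), by simp [turanGraph_adj, Nat.mod_eq_of_lt (by omega : 1 < r)]⟩

section Extremal

variable {V : Type*} [Fintype V] {G H : SimpleGraph V} [DecidableRel G.Adj] [DecidableRel H.Adj]
  {r : ℕ}

lemma SimpleGraph.IsTuranMaximal.lt_mpNum (h : G.IsTuranMaximal r) (hV : r ^ 2 < Fintype.card V) :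
    r < mpNum G := by
  classical
  have hG : ∀ v w, G.Adj v w ↔ h.finpartition.part v ≠ h.finpartition.part w := fun v w => by
    rw [ne_eq, ← h.not_adj_iff_part_eq, not_not]
  set P := h.finpartition
  obtain ⟨p, -, hp⟩ := exists_lt_card_fiber_of_mul_lt_card_of_maps_to (s := univ)
    (fun v _ => P.part_mem.2 (mem_univ v))
    ((Nat.mul_le_mul_right r h.card_parts_le).trans_lt (by rwa [← sq]))
  calc r < #{v | P.part v = p} := hp
    _ = (P.part ⁻¹' {p}).ncard := by rw [← Set.ncard_coe_finset]; simp [Set.preimage]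
    _ ≤ mpNum G := ncard_preimage_singleton_le_mpNum hG p

lemma SimpleGraph.IsTuranMaximal.card_edgeFinset_le_of_mpNum_le (hH : H.IsTuranMaximal r)
    (hG : mpNum G ≤ r) : #G.edgeFinset ≤ #H.edgeFinset :=
  hH.2 (cliqueFree_mpNum_add_one.mono (by omega))

lemma SimpleGraph.IsTuranMaximal.card_edgeFinset_lt_of_mpNum_le (hH : H.IsTuranMaximal r)
    (hG : mpNum G ≤ r) (hV : r ^ 2 < Fintype.card V) : #G.edgeFinset < #H.edgeFinset := by
  refine (hH.card_edgeFinset_le_of_mpNum_le hG).lt_of_ne fun heq => ?_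
  have hGmax : G.IsTuranMaximal r :=
    ⟨cliqueFree_mpNum_add_one.mono (by omega), fun _ _ hG' => heq ▸ hH.2 hG'⟩
  exact (hGmax.lt_mpNum hV).not_ge hG

end Extremal

lemma SimpleGraph.ncard_edgeSet {V : Type*} (G : SimpleGraph V) [Fintype G.edgeSet] :
    G.edgeSet.ncard = #G.edgeFinset := by
  rw [← coe_edgeFinset, Set.ncard_coe_finset]

theorem mexNum_eq_turan (a n : ℕ) (ha : 2 ≤ a) :
    (a ≤ n → n ≤ a ^ 2 → mexNum n a = (turanGraph n a).edgeSet.ncard) ∧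
    (a ^ 2 + 1 ≤ n → mexNum n a < (turanGraph n a).edgeSet.ncard) := by
  classical
  have hT : (turanGraph n a).IsTuranMaximal a := isTuranMaximal_turanGraph (by omega)
  refine ⟨fun han hn => IsGreatest.csSup_eq ⟨⟨_, mpNum_turanGraph (by omega) han hn, rfl⟩, ?_⟩,
    fun hn => ?_⟩
  · rintro _ ⟨G, hG, rfl⟩
    simpa only [ncard_edgeSet] using hT.card_edgeFinset_le_of_mpNum_le hG.le
  · have hpos : 0 < (turanGraph n a).edgeSet.ncard :=
      (Set.ncard_pos (Set.toFinite _)).2 (turanGraph_edgeSet_nonempty ha (by nlinarith))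
    have hle : mexNum n a ≤ (turanGraph n a).edgeSet.ncard - 1 := csSup_le' <| by
      rintro _ ⟨G, hG, rfl⟩
      simpa only [ncard_edgeSet] using Nat.le_sub_one_of_lt
        (hT.card_edgeFinset_lt_of_mpNum_le hG.le (by simpa using hn))
    omega
end
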